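/- arXiv:1311.1392 — 8 statements merged into one kernel-verified Lean document; each statement's English description precedes it below -/
import Mathlib

section
/- Let (E,d) be a metric space, C ⊆ E a connected set, x ∈ C, and 0 < r ≤ diam C. Then the 1-dimensional Hausdorff measure of C ∩ B(x,r) is at least r, where B(x,r) is the closed ball of radius r around x. -/
open MeasureTheory

lemma key_aux {E : Type*} [MetricSpace E] [MeasurableSpace E] [BorelSpace E]
    {C S : Set E} (hC : IsPreconnected C) {a b : E} (ha : a ∈ C) (hb : b ∈ C)
    {t : ℝ} (ht0 : 0 ≤ t) (ht : t ≤ dist a b)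
    (hsub : ∀ z ∈ C, dist a z ≤ t → z ∈ S) :
    ENNReal.ofReal t ≤ μH[1] S := by
  set f : E → ℝ := fun z => dist a z with hf
  have hlip : LipschitzWith 1 f := LipschitzWith.dist_right a
  have himg : IsPreconnected (f '' C) := hC.image f hlip.continuous.continuousOn
  have hIcc : Set.Icc (0 : ℝ) t ⊆ f '' C := by
    have h0 : (0 : ℝ) ∈ f '' C := ⟨a, ha, by simp [hf]⟩
    have hd : dist a b ∈ f '' C := ⟨b, hb, rfl⟩
    exact fun u hu => himg.Icc_subset h0 hd ⟨hu.1, hu.2.trans ht⟩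
  have hIcc' : Set.Icc (0 : ℝ) t ⊆ f '' S := by
    intro u hu
    obtain ⟨z, hz, hzu⟩ := hIcc hu
    exact ⟨z, hsub z hz (hzu.le.trans hu.2), hzu⟩
  calc ENNReal.ofReal t = μH[1] (Set.Icc (0 : ℝ) t) := by
        rw [hausdorffMeasure_real, Real.volume_Icc, sub_zero]
    _ ≤ μH[1] (f '' S) := measure_mono hIcc'
    _ ≤ μH[1] S := by
        simpa using hlip.hausdorffMeasure_image_le zero_le_one S

theorem stmt_0 {E : Type*} [MetricSpace E] [MeasurableSpace E] [BorelSpace E]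
    (C : Set E) (hC : IsConnected C) (x : E) (hx : x ∈ C)
    (r : ℝ) (hr : 0 < r) (hrd : ENNReal.ofReal r ≤ EMetric.diam C) :
    ENNReal.ofReal r ≤ μH[1] (C ∩ Metric.closedBall x r) := by
  by_cases h : ∃ y ∈ C, r ≤ dist x y
  · obtain ⟨y, hy, hry⟩ := h
    exact key_aux hC.isPreconnected hx hy hr.le hry
      (fun z hz hzr => ⟨hz, Metric.mem_closedBall'.2 hzr⟩)
  · push_neg at h
    have hCS : C ∩ Metric.closedBall x r = C := by
      apply Set.inter_eq_left.2
      intro z hz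
      exact Metric.mem_closedBall'.2 (h z hz).le
    rw [hCS]
    have hlim : ∀ t ∈ Set.Ioo (0 : ℝ) r, ENNReal.ofReal t ≤ μH[1] C := by
      intro t ht
      have : ENNReal.ofReal t < EMetric.diam C :=
        lt_of_lt_of_le (ENNReal.ofReal_lt_ofReal_iff hr |>.2 ht.2) hrd
      obtain ⟨a, ha, b, hb, hab⟩ : ∃ a ∈ C, ∃ b ∈ C, ENNReal.ofReal t < edist a b := by
        by_contra hcon
        push_neg at hcon
        exact absurd (EMetric.diam_le hcon) (not_le.2 this)
      have hab' : t < dist a b := by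
        rw [edist_dist] at hab
        exact (ENNReal.ofReal_lt_ofReal_iff_of_nonneg ht.1.le).1 hab
      exact key_aux hC.isPreconnected ha hb ht.1.le hab'.le (fun z hz _ => hz)
    have : Filter.Tendsto (fun t => ENNReal.ofReal t) (nhdsWithin r (Set.Ioo 0 r))
        (nhds (ENNReal.ofReal r)) :=
      (ENNReal.continuous_ofReal.tendsto r).mono_left nhdsWithin_le_nhds
    have hne : (nhdsWithin r (Set.Ioo 0 r)).NeBot := by
      rw [nhdsWithin_Ioo_eq_nhdsLT hr]
      infer_instance
    exact le_of_tendsto this (eventually_mem_nhdsWithin.mono hlim)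
end

section
/- Let (E,d) be a metric space, μ a finite Borel measure on E, A ⊆ E a Borel set, and 0 < t < ∞. Suppose that for every x ∈ A, the generalized upper density Θ̃^1(μ,x) := lim_{δ→0⁺} sup{ μ(C)/diam C : x ∈ C ⊆ E, C closed, 0 < diam C < δ } satisfies Θ̃^1(μ,x) ≥ t. Then μ(A) ≥ t · H^1(A). -/
/-!
Fix `t' < t` and an open `U ⊇ A`. Closed sets `C ⊆ U` of small diameter with
`t' · diam C ≤ μ C` form a fine cover of `A`. The Vitali covering lemma extracts a disjoint
subfamily `(Bᵢ)` such that every member of the cover meets some `Bᵢ` of at least half its diameter;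
disjointness gives `t' · ∑ diam Bᵢ ≤ μ U`. Keeping finitely many `Bᵢ` and enlarging the others
(whose total diameter is small) by twice their diameter covers `A` at total cost
`∑ diam Bᵢ + ε`, so `t' · μH[1] A ≤ μ U`. Outer regularity and `t' → t` finish the proof.
-/

open MeasureTheory Metric Filter Function Set Topology
open scoped ENNReal NNReal

universe u

section Covering

variable {X : Type*} [PseudoEMetricSpace X]

theorem exists_pairwiseDisjoint_subfamily_ediam_le_two_mul {F : Set (Set X)} {R : ℝ≥0∞}
    (hR : R ≠ ∞) (hF : ∀ C ∈ F, C.Nonempty ∧ ediam C ≤ R) :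
    ∃ u ⊆ F, u.PairwiseDisjoint id ∧
      ∀ C ∈ F, ∃ b ∈ u, (C ∩ b).Nonempty ∧ ediam C ≤ 2 * ediam b := by
  have hfin : ∀ C ∈ F, ediam C ≠ ∞ := fun C hC => ((hF C hC).2.trans_lt hR.lt_top).ne
  obtain ⟨u, huF, hu_disj, hu⟩ := Vitali.exists_disjoint_subfamily_covering_enlargement id F
    (fun C => (ediam C).toReal) 2 one_lt_two (fun _ _ => ENNReal.toReal_nonneg) R.toReal
    (fun C hC => ENNReal.toReal_mono hR (hF C hC).2) (fun C hC => (hF C hC).1)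
  refine ⟨u, huF, hu_disj, fun C hC => ?_⟩
  obtain ⟨b, hb, hCb, hle⟩ := hu C hC
  refine ⟨b, hb, hCb, ?_⟩
  rwa [← ENNReal.toReal_le_toReal (hfin C hC) (ENNReal.mul_ne_top ENNReal.ofNat_ne_top
    (hfin b (huF hb))), ENNReal.toReal_mul, ENNReal.toReal_ofNat]

variable {ι : Type*} {F : Set (Set X)} {s : Set X} {b : ι → Set X}

theorem subset_iUnion_cthickening_of_finset
    (hfine : ∀ x ∈ s, ∀ V ∈ 𝓝 x, ∃ C ∈ F, x ∈ C ∧ C ⊆ V)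
    (hF : ∀ C ∈ F, ∃ i, (C ∩ b i).Nonempty ∧ ediam C ≤ 2 * ediam (b i))
    (v : Finset ι) (hv : ∀ i ∈ v, IsClosed (b i)) {ρ : ι → ℝ≥0}
    (hρ : ∀ i ∉ v, 2 * ediam (b i) ≤ ρ i) :
    s ⊆ ⋃ i, cthickening (ρ i) (b i) := by
  intro x hx
  by_cases hxv : x ∈ ⋃ i ∈ v, b i
  · obtain ⟨i, -, hxi⟩ := mem_iUnion₂.1 hxv
    exact mem_iUnion.2 ⟨i, self_subset_cthickening _ hxi⟩
  have hK : IsClosed (⋃ i ∈ v, b i) := v.finite_toSet.isClosed_biUnion hv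
  obtain ⟨C, hC, hxC, hCK⟩ := hfine x hx _ (hK.isOpen_compl.mem_nhds hxv)
  obtain ⟨i, ⟨z, hzC, hzi⟩, hCi⟩ := hF C hC
  have hi : i ∉ v := fun hi => hCK hzC (mem_biUnion hi hzi)
  refine mem_iUnion.2 ⟨i, mem_cthickening_iff.2 ?_⟩
  calc infEDist x (b i) ≤ edist x z := infEDist_le_edist_of_mem hzi
    _ ≤ ediam C := edist_le_ediam_of_mem hxC hzC
    _ ≤ 2 * ediam (b i) := hCi
    _ ≤ ρ i := hρ i hi
    _ = ENNReal.ofReal (ρ i) := ENNReal.ofReal_coe_nnreal.symm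

theorem exists_cover_tsum_ediam_le_add
    (hfine : ∀ x ∈ s, ∀ V ∈ 𝓝 x, ∃ C ∈ F, x ∈ C ∧ C ⊆ V)
    (hF : ∀ C ∈ F, ∃ i, (C ∩ b i).Nonempty ∧ ediam C ≤ 2 * ediam (b i))
    (hb : ∀ i, IsClosed (b i)) (hsum : ∑' i, ediam (b i) ≠ ∞) {η : ℝ≥0∞} (hη : η ≠ 0) :
    ∃ c : ι → Set X, s ⊆ ⋃ i, c i ∧ (∀ i, ediam (c i) ≤ 5 * ediam (b i)) ∧
      ∑' i, ediam (c i) ≤ ∑' i, ediam (b i) + η := by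
  classical
  obtain ⟨v, hv⟩ : ∃ v : Finset ι, ∑' i : {i // i ∉ v}, ediam (b i) < η / 4 :=
    ((ENNReal.tendsto_tsum_compl_atTop_zero hsum).eventually_lt_const
      (ENNReal.div_pos hη ENNReal.ofNat_ne_top)).exists
  set ρ : ι → ℝ≥0 := fun i => if i ∈ v then 0 else 2 * (ediam (b i)).toNNReal
  have hbfin : ∀ i, ediam (b i) ≠ ∞ := fun i => ne_top_of_le_ne_top hsum (ENNReal.le_tsum i)
  have hρ : ∀ i, (ρ i : ℝ≥0∞) = {i | i ∉ v}.indicator (fun i => 2 * ediam (b i)) i := by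
    intro i
    by_cases hi : i ∈ v <;> simp [ρ, hi, ENNReal.coe_toNNReal (hbfin i)]
  have hdiam : ∀ i, ediam (cthickening (ρ i) (b i)) ≤ ediam (b i) + 2 * ρ i :=
    fun i => ediam_cthickening_le (ρ i)
  refine ⟨fun i => cthickening (ρ i) (b i),
    subset_iUnion_cthickening_of_finset hfine hF v (fun i _ => hb i) fun i hi => ?_,
    fun i => ?_, ?_⟩
  · simp [hρ, hi]
  · have : (ρ i : ℝ≥0∞) ≤ 2 * ediam (b i) := by
      rw [hρ]; exact indicator_le_self _ _ i
    calc ediam (cthickening (ρ i) (b i)) ≤ ediam (b i) + 2 * (2 * ediam (b i)) :=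
          (hdiam i).trans (by gcongr)
      _ = 5 * ediam (b i) := by ring
  · calc ∑' i, ediam (cthickening (ρ i) (b i)) ≤ ∑' i, (ediam (b i) + 2 * ρ i) :=
          ENNReal.tsum_le_tsum hdiam
      _ = ∑' i, ediam (b i) + 4 * ∑' i : {i // i ∉ v}, ediam (b i) := by
          simp only [ENNReal.tsum_add, ENNReal.tsum_mul_left, hρ]
          rw [← tsum_subtype {i | i ∉ v}, ENNReal.tsum_mul_left, ← mul_assoc]
          congr 2
          norm_num
      _ ≤ ∑' i, ediam (b i) + η := by
          gcongr
          calc 4 * ∑' i : {i // i ∉ v}, ediam (b i) ≤ 4 * (η / 4) := by gcongr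
            _ ≤ η := ENNReal.mul_div_le

end Covering

theorem hausdorffMeasure_one_le_of_forall_cover {X : Type*} [EMetricSpace X] [MeasurableSpace X]
    [BorelSpace X] {s : Set X} {L : ℝ≥0∞}
    (h : ∀ r > 0, ∀ η > 0, ∃ (ι : Type*) (_ : Countable ι) (c : ι → Set X),
      s ⊆ ⋃ i, c i ∧ (∀ i, ediam (c i) ≤ r) ∧ ∑' i, ediam (c i) ≤ L + η) :
    μH[1] s ≤ L := by
  have hpos : ∀ n : ℕ, 0 < (n : ℝ≥0∞)⁻¹ := fun n => ENNReal.inv_pos.2 (ENNReal.natCast_ne_top n)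
  choose ι hι c hcov hdiam hsum using fun n : ℕ => h _ (hpos n) _ (hpos n)
  have hlim : Tendsto (fun n : ℕ => L + (n : ℝ≥0∞)⁻¹) atTop (𝓝 L) := by
    simpa using tendsto_const_nhds.add ENNReal.tendsto_inv_nat_nhds_zero
  calc μH[1] s ≤ liminf (fun n => ∑' i, ediam (c n i) ^ (1 : ℝ)) atTop :=
        Measure.hausdorffMeasure_le_liminf_tsum 1 s _ ENNReal.tendsto_inv_nat_nhds_zero c
          (Eventually.of_forall hdiam) (Eventually.of_forall hcov)
    _ ≤ liminf (fun n : ℕ => L + (n : ℝ≥0∞)⁻¹) atTop :=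
        liminf_le_liminf (Eventually.of_forall fun n => by simpa using hsum n)
    _ = L := hlim.liminf_eq

theorem mul_tsum_ediam_le_measure {X ι : Type*} [PseudoEMetricSpace X] [MeasurableSpace X]
    {μ : Measure X} {b : ι → Set X} (hb : ∀ i, MeasurableSet (b i))
    (hdisj : Pairwise (Disjoint on b)) {U : Set X} (hbU : ∀ i, b i ⊆ U) {t : ℝ≥0∞}
    (ht : ∀ i, t * ediam (b i) ≤ μ (b i)) :
    t * ∑' i, ediam (b i) ≤ μ U :=
  calc t * ∑' i, ediam (b i) = ∑' i, t * ediam (b i) := ENNReal.tsum_mul_left.symm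
    _ ≤ ∑' i, μ (b i) := ENNReal.tsum_le_tsum ht
    _ ≤ μ (⋃ i, b i) := tsum_meas_le_meas_iUnion_of_disjoint μ hb hdisj
    _ ≤ μ U := measure_mono (iUnion_subset hbU)

section Density

variable {E : Type u}

/-- The generalized upper density `Θ̃¹(μ, x)`. -/
noncomputable def generalizedUpperDensity [PseudoEMetricSpace E] [MeasurableSpace E]
    (μ : Measure E) (x : E) : ℝ≥0∞ :=
  ⨅ (δ : ℝ≥0∞) (_ : 0 < δ),
    ⨆ (C : Set E) (_ : IsClosed C ∧ x ∈ C ∧ 0 < ediam C ∧ ediam C < δ), μ C / ediam C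

theorem exists_isClosed_subset_of_lt_generalizedUpperDensity [PseudoEMetricSpace E]
    [MeasurableSpace E] {μ : Measure E} {x : E} {t : ℝ≥0∞}
    (ht : t < generalizedUpperDensity μ x) {V : Set E} (hV : V ∈ 𝓝 x) {δ : ℝ≥0∞} (hδ : 0 < δ) :
    ∃ C, IsClosed C ∧ x ∈ C ∧ C ⊆ V ∧ 0 < ediam C ∧ ediam C < δ ∧ t * ediam C ≤ μ C := by
  obtain ⟨ε, hε, hεV⟩ := EMetric.mem_nhds_iff.1 hV
  have := ht.trans_le (iInf₂_le (min δ ε) (lt_min hδ hε))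
  simp only [lt_iSup_iff] at this
  obtain ⟨C, ⟨hC, hxC, hpos, hlt⟩, htC⟩ := this
  refine ⟨C, hC, hxC, fun y hy => hεV ?_, hpos, hlt.trans_le (min_le_left _ _),
    ENNReal.mul_le_of_le_div htC.le⟩
  exact (edist_le_ediam_of_mem hy hxC).trans_lt (hlt.trans_le (min_le_right _ _))

variable [EMetricSpace E] [MeasurableSpace E] [BorelSpace E] {μ : Measure E} {A U : Set E}
  {t : ℝ≥0∞}

theorem exists_countable_cover_tsum_ediam_le (hU : IsOpen U) (hAU : A ⊆ U) (hμU : μ U ≠ ∞)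
    (ht : t ≠ 0) (hA : ∀ x ∈ A, t < generalizedUpperDensity μ x) {r η : ℝ≥0∞} (hr : 0 < r)
    (hη : 0 < η) :
    ∃ (ι : Type u) (_ : Countable ι) (c : ι → Set E),
      A ⊆ ⋃ i, c i ∧ (∀ i, ediam (c i) ≤ r) ∧ ∑' i, ediam (c i) ≤ μ U / t + η := by
  set δ := min (r / 5) 1
  have hδ : 0 < δ := lt_min (ENNReal.div_pos hr.ne' ENNReal.ofNat_ne_top) one_pos
  set F : Set (Set E) := {C | IsClosed C ∧ C ⊆ U ∧ 0 < ediam C ∧ ediam C < δ ∧ t * ediam C ≤ μ C}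
  have hfine : ∀ x ∈ A, ∀ V ∈ 𝓝 x, ∃ C ∈ F, x ∈ C ∧ C ⊆ V := by
    intro x hx V hV
    obtain ⟨C, hC, hxC, hCV, hpos, hlt, hμC⟩ := exists_isClosed_subset_of_lt_generalizedUpperDensity
      (hA x hx) (inter_mem hV (hU.mem_nhds (hAU hx))) hδ
    exact ⟨C, ⟨hC, hCV.trans inter_subset_right, hpos, hlt, hμC⟩, hxC, hCV.trans inter_subset_left⟩
  obtain ⟨u, huF, hu_disj, hu⟩ := exists_pairwiseDisjoint_subfamily_ediam_le_two_mul (F := F)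
    ENNReal.one_ne_top fun C hC =>
      ⟨(ediam_pos_iff.1 hC.2.2.1).nonempty, hC.2.2.2.1.le.trans (min_le_right _ _)⟩
  have hsum : ∑' b : u, ediam (b : Set E) ≤ μ U / t := by
    rw [ENNReal.le_div_iff_mul_le (Or.inl ht) (Or.inr hμU), mul_comm]
    exact mul_tsum_ediam_le_measure (fun b => (huF b.2).1.measurableSet)
      (hu_disj.subtype _ _) (fun b => (huF b.2).2.1) fun b => (huF b.2).2.2.2.2
  have hfin : ∑' b : u, ediam (b : Set E) ≠ ∞ := (hsum.trans_lt (ENNReal.div_lt_top hμU ht)).ne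
  have : Countable u := countable_univ_iff.1
    ((Summable.countable_support_ennreal hfin).mono fun b _ => (huF b.2).2.2.1.ne')
  obtain ⟨c, hcov, hdiam, hcsum⟩ := exists_cover_tsum_ediam_le_add hfine
    (fun C hC => by
      obtain ⟨b, hb, hCb⟩ := hu C hC
      exact ⟨⟨b, hb⟩, hCb⟩) (fun b => (huF b.2).1) hfin hη.ne'
  refine ⟨u, this, c, hcov, fun b => (hdiam b).trans ?_, hcsum.trans (by gcongr)⟩
  calc 5 * ediam (b : Set E) ≤ 5 * (r / 5) := by
        gcongr; exact (huF b.2).2.2.2.1.le.trans (min_le_left _ _)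
    _ ≤ r := ENNReal.mul_div_le

theorem mul_hausdorffMeasure_le_of_isOpen (hU : IsOpen U) (hAU : A ⊆ U) (hμU : μ U ≠ ∞)
    (hA : ∀ x ∈ A, t < generalizedUpperDensity μ x) :
    t * μH[1] A ≤ μ U := by
  rcases eq_or_ne t 0 with rfl | ht
  · simp
  exact ENNReal.mul_le_of_le_div' <| hausdorffMeasure_one_le_of_forall_cover fun r hr η hη =>
    exists_countable_cover_tsum_ediam_le hU hAU hμU ht hA hr hη

theorem mul_hausdorffMeasure_le_measure [IsFiniteMeasure μ]
    (hA : ∀ x ∈ A, t < generalizedUpperDensity μ x) :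
    t * μH[1] A ≤ μ A := by
  rw [A.measure_eq_iInf_isOpen μ]
  exact le_iInf₂ fun U hAU => le_iInf fun hU =>
    mul_hausdorffMeasure_le_of_isOpen hU hAU (measure_ne_top μ U) hA

end Density

theorem stmt_2_general {E : Type*} [MetricSpace E] [MeasurableSpace E] [BorelSpace E]
    (μ : Measure E) [IsFiniteMeasure μ] (A : Set E)
    (t : ℝ≥0∞)
    (h : ∀ x ∈ A,
      t ≤ ⨅ (δ : ℝ≥0∞) (_ : 0 < δ),
        ⨆ (C : Set E) (_ : IsClosed C ∧ x ∈ C ∧ 0 < EMetric.diam C ∧ EMetric.diam C < δ),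
          μ C / EMetric.diam C) :
    t * μH[1] A ≤ μ A :=
  ENNReal.mul_le_of_forall_lt fun t' ht' _ hc =>
    (mul_le_mul_right hc.le t').trans
      (mul_hausdorffMeasure_le_measure fun x hx => ht'.trans_le (h x hx))

theorem stmt_2 {E : Type*} [MetricSpace E] [MeasurableSpace E] [BorelSpace E]
    (μ : Measure E) [IsFiniteMeasure μ] (A : Set E) (hA : MeasurableSet A)
    (t : ℝ≥0∞) (ht0 : 0 < t) (htop : t ≠ ⊤)
    (h : ∀ x ∈ A,
      t ≤ ⨅ (δ : ℝ≥0∞) (_ : 0 < δ),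
        ⨆ (C : Set E) (_ : IsClosed C ∧ x ∈ C ∧ 0 < EMetric.diam C ∧ EMetric.diam C < δ),
          μ C / EMetric.diam C) :
    t * μH[1] A ≤ μ A :=
  stmt_2_general μ A t h
end

section
/- Let X be a uniformly rotund Banach space with modulus of uniform rotundity δ_X, and let x₀, x₁, z ∈ X be the vertices of a nondegenerate triangle (i.e. not collinear). Then ‖x₀−z‖ + ‖z−x₁‖ ≥ ‖x₀−x₁‖ · (1 + δ_X( dist(z, x₀ + span{x₁−x₀}) / (2(‖x₀−z‖ + ‖z−x₁‖)) )). -/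
theorem stmt_7 {X : Type*} [NormedAddCommGroup X] [NormedSpace ℝ X]
    (δX : ℝ → ℝ)
    (hδX : ∀ ε : ℝ, δX ε =
      sInf {d : ℝ | ∃ x y : X, ‖x‖ ≤ 1 ∧ ‖y‖ ≤ 1 ∧ ε ≤ ‖x - y‖ ∧ d = 1 - ‖x + y‖ / 2})
    (hUR : ∀ ε : ℝ, 0 < ε → ε ≤ 2 → 0 < δX ε)
    (x₀ x₁ z : X) (hcol : ¬ Collinear ℝ ({x₀, x₁, z} : Set X)) :
    ‖x₀ - x₁‖ *
        (1 + δX (Metric.infDist z (Set.range fun s : ℝ => x₀ + s • (x₁ - x₀)) /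
          (2 * (‖x₀ - z‖ + ‖z - x₁‖)))) ≤
      ‖x₀ - z‖ + ‖z - x₁‖ := by
  have hne : x₀ ≠ x₁ := by
    rintro rfl
    apply hcol
    have h2 : ({x₀, x₀, z} : Set X) = {x₀, z} := by simp
    rw [h2]
    exact collinear_pair ℝ x₀ z
  set α := ‖x₀ - z‖ with hαdef
  set β := ‖z - x₁‖ with hβdef
  set k := ‖x₀ - x₁‖ with hkdef
  set L := α + β with hLdef
  have hk : 0 < k := norm_pos_iff.mpr (sub_ne_zero.mpr hne)
  have hkL : k ≤ L := by
    have h := norm_add_le (x₀ - z) (z - x₁)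
    simpa using h
  have hL : 0 < L := lt_of_lt_of_le hk hkL
  have hLne : L ≠ 0 := ne_of_gt hL
  have hα0 : 0 ≤ α := norm_nonneg _
  have hβ0 : 0 ≤ β := norm_nonneg _
  set d := Metric.infDist z (Set.range fun s : ℝ => x₀ + s • (x₁ - x₀)) with hddef
  have hd0 : 0 ≤ d := Metric.infDist_nonneg
  set w : X := (x₀ - z) + (α / L) • (x₁ - x₀) with hwdef
  have hdw : d ≤ ‖w‖ := by
    have hmem : x₀ + (α / L) • (x₁ - x₀) ∈ Set.range fun s : ℝ => x₀ + s • (x₁ - x₀) :=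
      ⟨α / L, rfl⟩
    have h := Metric.infDist_le_dist_of_mem (x := z) hmem
    rw [dist_eq_norm, norm_sub_rev] at h
    have hw : (x₀ + (α / L) • (x₁ - x₀)) - z = w := by rw [hwdef]; abel
    rw [hw] at h
    exact h
  have hβL : β / L = 1 - α / L := by
    field_simp
    rw [hLdef]; ring
  have hP : (x₀ - x₁) + w = (x₀ - z) + (β / L) • (x₀ - x₁) := by
    rw [hwdef, hβL]; module
  have hQ : (x₀ - x₁) - w = (z - x₁) + (α / L) • (x₀ - x₁) := by
    rw [hwdef]; module
  have hsknorm : ∀ c : ℝ, 0 ≤ c → ‖c • (x₀ - x₁)‖ = c * k := by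
    intro c hc
    rw [norm_smul, Real.norm_eq_abs, abs_of_nonneg hc]
  have hPn : ‖(x₀ - x₁) + w‖ ≤ L := by
    rw [hP]
    have h1 : ‖(x₀ - z) + (β / L) • (x₀ - x₁)‖ ≤ α + (β / L) * k := by
      calc ‖(x₀ - z) + (β / L) • (x₀ - x₁)‖ ≤ α + ‖(β / L) • (x₀ - x₁)‖ := norm_add_le _ _
        _ = α + (β / L) * k := by rw [hsknorm _ (div_nonneg hβ0 hL.le)]
    have h2 : (β / L) * k ≤ β := by
      rw [div_mul_eq_mul_div, div_le_iff₀ hL]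
      exact mul_le_mul_of_nonneg_left hkL hβ0
    linarith
  have hQn : ‖(x₀ - x₁) - w‖ ≤ L := by
    rw [hQ]
    have h1 : ‖(z - x₁) + (α / L) • (x₀ - x₁)‖ ≤ β + (α / L) * k := by
      calc ‖(z - x₁) + (α / L) • (x₀ - x₁)‖ ≤ β + ‖(α / L) • (x₀ - x₁)‖ := norm_add_le _ _
        _ = β + (α / L) * k := by rw [hsknorm _ (div_nonneg hα0 hL.le)]
    have h2 : (α / L) * k ≤ α := by
      rw [div_mul_eq_mul_div, div_le_iff₀ hL]
      exact mul_le_mul_of_nonneg_left hkL hα0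
    linarith
  set u : X := L⁻¹ • ((x₀ - x₁) + w) with hudef
  set v : X := L⁻¹ • ((x₀ - x₁) - w) with hvdef
  have hnorm_inv : ∀ y : X, ‖L⁻¹ • y‖ = ‖y‖ / L := by
    intro y
    rw [norm_smul, Real.norm_eq_abs, abs_inv, abs_of_pos hL, inv_mul_eq_div]
  have hu : ‖u‖ ≤ 1 := by
    rw [hudef, hnorm_inv, div_le_one hL]; exact hPn
  have hv : ‖v‖ ≤ 1 := by
    rw [hvdef, hnorm_inv, div_le_one hL]; exact hQn
  have huv : u - v = (2 / L) • w := by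
    rw [hudef, hvdef]; module
  have huvs : u + v = (2 / L) • (x₀ - x₁) := by
    rw [hudef, hvdef]; module
  have hεuv : d / (2 * L) ≤ ‖u - v‖ := by
    rw [huv, norm_smul, Real.norm_eq_abs, abs_of_pos (by positivity : (0:ℝ) < 2 / L)]
    rw [div_le_iff₀ (by positivity : (0:ℝ) < 2 * L)]
    have heq : 2 / L * ‖w‖ * (2 * L) = 4 * ‖w‖ := by field_simp; ring
    rw [heq]
    nlinarith [norm_nonneg w]
  have hsum : ‖u + v‖ = 2 / L * k := by
    rw [huvs, hsknorm _ (by positivity : (0:ℝ) ≤ 2 / L)]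
  have hδ : δX (d / (2 * L)) ≤ 1 - k / L := by
    rw [hδX]
    apply csInf_le
    · refine ⟨0, ?_⟩
      rintro r ⟨a, b, ha, hb, -, rfl⟩
      have := norm_add_le a b
      linarith
    · refine ⟨u, v, hu, hv, hεuv, ?_⟩
      rw [hsum]
      field_simp
  have hδ' : δX (d / (2 * L)) * L ≤ L - k := by
    have h := mul_le_mul_of_nonneg_right hδ hL.le
    calc δX (d / (2 * L)) * L ≤ (1 - k / L) * L := h
      _ = L - k := by field_simp
  nlinarith [mul_le_mul_of_nonneg_left hδ' hk.le, sq_nonneg (L - k), hk, hL, hkL]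
end

section
/- Let X be a separable Banach space, U ⊆ X open, ξ a gauge, r₀ > 0, and let C ⊆ X be a compact connected set that is (ξ,r₀) almost minimizing in U. If x ∈ C, 0 < r < min(diam C, r₀), and B(x,r) ⊆ U, then the cardinality of C ∩ ∂B(x,r) is at least 2. -/
/-!
If `C` met `∂B(x,r)` in at most one point, replacing `C ∩ B(x,r)` by that point (or by `{x}` if
there is none) would give a compact connected competitor of zero length inside the ball, so almost
minimality would force `μH[1] (C ∩ B(x,r)) = 0`. But `C` is connected and contains `x` and some
other point, so `dist x` maps `C ∩ B(x,r)` onto an interval of positive length, and being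
1-Lipschitz it cannot increase `μH[1]`.
-/

open MeasureTheory

/-- A gauge: a nondecreasing function on `(0,∞)`, nonnegative, tending to `0` at `0⁺`. -/
def IsGauge (ξ : ℝ → ℝ) : Prop :=
  MonotoneOn ξ (Set.Ioi 0) ∧ (∀ r : ℝ, 0 < r → 0 ≤ ξ r) ∧
    Filter.Tendsto ξ (nhdsWithin 0 (Set.Ioi 0)) (nhds 0)

/-- `C` is a compact connected set of finite length, `(ξ, r₀)` almost minimizing in `U`. -/
def AlmostMinimizing {X : Type*} [NormedAddCommGroup X] [NormedSpace ℝ X]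
    [MeasurableSpace X] [BorelSpace X]
    (ξ : ℝ → ℝ) (r₀ : ℝ) (U : Set X) (C : Set X) : Prop :=
  IsCompact C ∧ IsConnected C ∧ μH[1] C < ⊤ ∧
    ∀ x ∈ C ∩ U, ∀ r : ℝ, 0 < r → r ≤ r₀ → Metric.closedBall x r ⊆ U →
      ∀ C' : Set X, IsCompact C' → IsConnected C' →
        C' \ Metric.closedBall x r = C \ Metric.closedBall x r →
        μH[1] (C ∩ Metric.closedBall x r) ≤
          ENNReal.ofReal (1 + ξ r) * μH[1] (C' ∩ Metric.closedBall x r)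

open Metric Set

theorem Set.Subsingleton.hausdorffMeasure_eq_zero {X : Type*} [EMetricSpace X]
    [MeasurableSpace X] [BorelSpace X] {s : Set X} (hs : s.Subsingleton) {d : ℝ} (hd : 0 < d) :
    μH[d] s = 0 :=
  (Measure.hausdorffMeasure_zero_or_top hd s).resolve_right
    ((Measure.hausdorffMeasure_le_one_of_subsingleton hs le_rfl).trans_lt ENNReal.one_lt_top).ne

section Length

variable {X : Type*} [MetricSpace X] [MeasurableSpace X] [BorelSpace X] {s : Set X} {x w : X}

theorem IsPreconnected.ofReal_le_hausdorffMeasure_inter_closedBall (hs : IsPreconnected s)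
    (hx : x ∈ s) (hw : w ∈ s) {r : ℝ} (hrw : r ≤ dist x w) :
    ENNReal.ofReal r ≤ μH[1] (s ∩ closedBall x r) := by
  have hdist : LipschitzWith 1 (dist x) := LipschitzWith.dist_right x
  have hIcc : Icc 0 (dist x w) ⊆ dist x '' s :=
    (hs.image _ hdist.continuous.continuousOn).Icc_subset ⟨x, hx, dist_self x⟩ ⟨w, hw, rfl⟩
  have himage : Icc 0 r ⊆ dist x '' (s ∩ closedBall x r) := by
    intro t ht
    obtain ⟨u, hu, rfl⟩ := hIcc ⟨ht.1, ht.2.trans hrw⟩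
    exact ⟨u, ⟨hu, by rw [mem_closedBall, dist_comm]; exact ht.2⟩, rfl⟩
  calc ENNReal.ofReal r = μH[1] (Icc (0 : ℝ) r) := by
        rw [hausdorffMeasure_real, Real.volume_Icc, sub_zero]
    _ ≤ μH[1] (dist x '' (s ∩ closedBall x r)) := measure_mono himage
    _ ≤ μH[1] (s ∩ closedBall x r) := by
        simpa using hdist.hausdorffMeasure_image_le zero_le_one (s ∩ closedBall x r)

theorem IsPreconnected.hausdorffMeasure_inter_closedBall_pos (hs : IsPreconnected s)
    (hx : x ∈ s) (hw : w ∈ s) (hwx : w ≠ x) {r : ℝ} (hr : 0 < r) :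
    0 < μH[1] (s ∩ closedBall x r) :=
  calc 0 < ENNReal.ofReal (min r (dist x w)) := by simp [hr, dist_pos.2 hwx.symm]
    _ ≤ μH[1] (s ∩ closedBall x (min r (dist x w))) :=
        hs.ofReal_le_hausdorffMeasure_inter_closedBall hx hw (min_le_right _ _)
    _ ≤ μH[1] (s ∩ closedBall x r) :=
        measure_mono (inter_subset_inter_right _ (closedBall_subset_closedBall (min_le_left _ _)))

end Length

theorem IsPreconnected.diff_of_subsingleton_inter_diff {α : Type*} [TopologicalSpace α]
    {C O B : Set α} (hC : IsPreconnected C) (hCc : IsClosed C) (hO : IsOpen O) (hB : IsClosed B)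
    (hOB : O ⊆ B) (hCO : (C ∩ O).Nonempty) (hS : (C ∩ (B \ O)).Subsingleton) :
    IsPreconnected (C \ O) := by
  refine (isPreconnected_iff_subset_of_fully_disjoint_closed (hCc.sdiff hO)).2 ?_
  suffices key : ∀ t₁ t₂, IsClosed t₁ → IsClosed t₂ → C \ O ⊆ t₁ ∪ t₂ → Disjoint t₁ t₂ →
      Disjoint (C ∩ (B \ O)) t₂ → C \ O ⊆ t₁ by
    intro t₁ t₂ h₁ h₂ hsub hdisj
    by_cases h : Disjoint (C ∩ (B \ O)) t₂
    · exact Or.inl (key t₁ t₂ h₁ h₂ hsub hdisj h)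
    obtain ⟨y, hy, hy₂⟩ := not_disjoint_iff.1 h
    refine Or.inr (key t₂ t₁ h₂ h₁ (union_comm t₁ t₂ ▸ hsub) hdisj.symm ?_)
    exact disjoint_left.2 fun z hz hz₁ => disjoint_left.1 hdisj hz₁ (hS hy hz ▸ hy₂)
  intro t₁ t₂ h₁ h₂ hsub hdisj hS₂
  -- `A` is clopen in `C` and misses `O`, so connectedness of `C` puts `C` inside `B ∪ t₁`.
  set A := C \ O ∩ t₂
  have hA : IsClosed A := (hCc.sdiff hO).inter h₂
  have hAB : Disjoint A B := disjoint_left.2 fun z hz hzB =>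
    disjoint_left.1 hS₂ ⟨hz.1.1, hzB, hz.1.2⟩ hz.2
  have hAt₁ : Disjoint A t₁ := disjoint_left.2 fun z hz hz₁ => disjoint_left.1 hdisj hz₁ hz.2
  have hcover : C ⊆ A ∪ (B ∪ t₁) := by
    intro z hz
    by_cases hzB : z ∈ B
    · exact Or.inr (Or.inl hzB)
    have hzO : z ∈ C \ O := ⟨hz, fun h => hzB (hOB h)⟩
    rcases hsub hzO with h | h
    · exact Or.inr (Or.inr h)
    · exact Or.inl ⟨hzO, h⟩
  have hsep : C ∩ (A ∩ (B ∪ t₁)) = ∅ := by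
    rw [inter_union_distrib_left, hAB.inter_eq, hAt₁.inter_eq, union_empty, inter_empty]
  rcases isPreconnected_iff_subset_of_disjoint_closed.1 hC A (B ∪ t₁) hA (hB.union h₁) hcover
    hsep with hCA | hCBt
  · obtain ⟨p, hpC, hpO⟩ := hCO
    exact absurd hpO (hCA hpC).1.2
  intro z hz
  rcases hCBt hz.1 with hzB | hz₁
  · exact (hsub hz).resolve_right (disjoint_left.1 hS₂ ⟨hz.1, hzB, hz.2⟩)
  · exact hz₁

theorem IsCompact.exists_competitor_of_subsingleton_inter_sphere {X : Type*} [MetricSpace X]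
    {C : Set X} (hC : IsCompact C) (hCconn : IsPreconnected C) {x : X} (hx : x ∈ C) {r : ℝ}
    (hr : 0 < r) (hS : (C ∩ sphere x r).Subsingleton) :
    ∃ K : Set X, IsCompact K ∧ IsConnected K ∧ K \ closedBall x r = C \ closedBall x r ∧
      (K ∩ closedBall x r).Subsingleton := by
  rcases (C ∩ sphere x r).eq_empty_or_nonempty with hS₀ | ⟨y, hyC, hyS⟩
  · have hCball : C ⊆ ball x r := by
      refine hCconn.subset_left_of_subset_union isOpen_ball isClosed_closedBall.isOpen_compl
        (disjoint_compl_right.mono_left ball_subset_closedBall) (fun z hz => ?_)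
        ⟨x, hx, mem_ball_self hr⟩
      rcases lt_trichotomy (dist z x) r with h | h | h
      · exact Or.inl h
      · exact absurd hS₀ (nonempty_iff_ne_empty.1 ⟨z, hz, h⟩)
      · exact Or.inr (not_le.2 h)
    refine ⟨{x}, isCompact_singleton, isConnected_singleton, ?_,
      subsingleton_singleton.anti inter_subset_left⟩
    rw [sdiff_eq_empty.2 (singleton_subset_iff.2 (mem_closedBall_self hr.le)),
      sdiff_eq_empty.2 (hCball.trans ball_subset_closedBall)]
  · have hK : (C \ ball x r) ∩ closedBall x r = C ∩ sphere x r := by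
      rw [← inter_sdiff_right_comm, inter_sdiff_assoc, closedBall_sdiff_ball]
    refine ⟨C \ ball x r, hC.diff isOpen_ball, ⟨⟨y, hyC, ?_⟩, ?_⟩, ?_, hK ▸ hS⟩
    · exact fun h => (mem_ball.1 h).ne hyS
    · refine hCconn.diff_of_subsingleton_inter_diff hC.isClosed isOpen_ball isClosed_closedBall
        ball_subset_closedBall ⟨x, hx, mem_ball_self hr⟩ ?_
      rwa [closedBall_sdiff_ball]
    · rw [sdiff_sdiff, union_eq_self_of_subset_left ball_subset_closedBall]

theorem stmt_8_general {X : Type*} [NormedAddCommGroup X] [NormedSpace ℝ X]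
    [MeasurableSpace X] [BorelSpace X]
    (U : Set X) (ξ : ℝ → ℝ) (r₀ : ℝ)
    (C : Set X) (hC : AlmostMinimizing ξ r₀ U C)
    (x : X) (hx : x ∈ C) (r : ℝ) (hr : 0 < r)
    (hrd : ENNReal.ofReal r < EMetric.diam C) (hrr₀ : r < r₀)
    (hB : Metric.closedBall x r ⊆ U) :
    2 ≤ (C ∩ Metric.sphere x r).encard := by
  obtain ⟨hCcomp, hCconn, -, hmin⟩ := hC
  rw [show (2 : ℕ∞) = 1 + 1 from rfl, ENat.add_one_le_iff ENat.one_ne_top,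
    one_lt_encard_iff_nontrivial]
  by_contra hS
  rw [not_nontrivial_iff] at hS
  have hCnt : C.Nontrivial := by
    by_contra h
    rw [not_nontrivial_iff] at h
    exact not_lt_zero (hrd.trans_eq h.ediam_eq)
  obtain ⟨w, hw, hwx⟩ := hCnt.exists_ne x
  obtain ⟨K, hK, hKconn, hKout, hKin⟩ :=
    hCcomp.exists_competitor_of_subsingleton_inter_sphere hCconn.isPreconnected hx hr hS
  have hle := hmin x ⟨hx, hB (mem_closedBall_self hr.le)⟩ r hr hrr₀.le hB K hK hKconn hKout
  rw [hKin.hausdorffMeasure_eq_zero one_pos, mul_zero] at hle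
  exact (hCconn.isPreconnected.hausdorffMeasure_inter_closedBall_pos hx hw hwx hr).ne'
    (nonpos_iff_eq_zero.1 hle)

theorem stmt_8 {X : Type*} [NormedAddCommGroup X] [NormedSpace ℝ X] [CompleteSpace X]
    [TopologicalSpace.SeparableSpace X] [MeasurableSpace X] [BorelSpace X]
    (U : Set X) (hU : IsOpen U) (ξ : ℝ → ℝ) (hξ : IsGauge ξ) (r₀ : ℝ) (hr₀ : 0 < r₀)
    (C : Set X) (hC : AlmostMinimizing ξ r₀ U C)
    (x : X) (hx : x ∈ C) (r : ℝ) (hr : 0 < r)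
    (hrd : ENNReal.ofReal r < EMetric.diam C) (hrr₀ : r < r₀)
    (hB : Metric.closedBall x r ⊆ U) :
    2 ≤ (C ∩ Metric.sphere x r).encard :=
  stmt_8_general U ξ r₀ C hC x hx r hr hrd hrr₀ hB
end

section
/- Let X be a separable Banach space, C ⊆ X a compact connected set, x ∈ C, r > 0, B = B(x,r) the closed ball, and suppose C ∩ ∂B = {x₁,…,x_N} is finite and nonempty. Then for any x₀ ∈ B, the set C' = (C \\ B) ∪ (⋃_{n=1}^N [x₀, x_n]) is compact and connected, and C' \\ B = C \\ B. -/
open MeasureTheory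

theorem stmt_9 {X : Type*} [NormedAddCommGroup X] [NormedSpace ℝ X]
    [MeasurableSpace X] [BorelSpace X]
    (C : Set X) (hCc : IsCompact C) (hCconn : IsConnected C) (hCfin : μH[1] C < ⊤)
    (x : X) (hx : x ∈ C) (r : ℝ) (hr : 0 < r)
    (F : Finset X) (hFne : F.Nonempty) (hF : (F : Set X) = C ∩ Metric.sphere x r)
    (x₀ : X) (hx₀ : x₀ ∈ Metric.closedBall x r) :
    ∀ C' : Set X,
      C' = (C \ Metric.closedBall x r) ∪ ⋃ y ∈ F, segment ℝ x₀ y →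
      IsCompact C' ∧ IsConnected C' ∧
        C' \ Metric.closedBall x r = C \ Metric.closedBall x r := by
  intro C' hC'
  set B := Metric.closedBall x r with hB
  set K : Set X := ⋃ y ∈ F, segment ℝ x₀ y with hK
  -- each segment is compact
  have hsegcomp : ∀ y : X, IsCompact (segment ℝ x₀ y) := by
    intro y
    rw [segment_eq_image']
    exact isCompact_Icc.image (by continuity)
  have hKcomp : IsCompact K := F.isCompact_biUnion (fun y _ => hsegcomp y)
  have hKclosed : IsClosed K := hKcomp.isClosed
  -- K ⊆ B
  have hFsub : (F : Set X) ⊆ B := by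
    rw [hF]; intro y hy; exact Metric.sphere_subset_closedBall hy.2
  have hKB : K ⊆ B := by
    intro z hz
    simp only [hK, Set.mem_iUnion] at hz
    obtain ⟨y, hyF, hz⟩ := hz
    exact (convex_closedBall x r).segment_subset hx₀ (hFsub hyF) hz
  have hFK : (F : Set X) ⊆ K := by
    intro y hy
    simp only [hK, Set.mem_iUnion]
    exact ⟨y, hy, right_mem_segment ℝ x₀ y⟩
  -- closure of C \ B
  have hclos : closure (C \ B) ⊆ (C \ B) ∪ K := by
    intro z hz
    have hzC : z ∈ C := hCc.isClosed.closure_subset_iff.mpr (Set.diff_subset) hz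
    have hzd : r ≤ dist z x := by
      have : closure (C \ B) ⊆ {w | r ≤ dist w x} := by
        apply closure_minimal
        · intro w hw
          have : ¬ dist w x ≤ r := fun h => hw.2 (Metric.mem_closedBall.mpr h)
          exact le_of_lt (lt_of_not_ge this)
        · exact isClosed_le continuous_const (continuous_id.dist continuous_const)
      exact this hz
    rcases eq_or_lt_of_le hzd with h | h
    · right
      apply hFK
      rw [hF]
      exact ⟨hzC, Metric.mem_sphere.mpr h.symm⟩
    · left
      exact ⟨hzC, fun hzB => absurd (Metric.mem_closedBall.mp hzB) (not_le.mpr h)⟩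
  have hC'closed : IsClosed C' := by
    rw [hC']
    rw [← closure_eq_iff_isClosed]
    apply Set.Subset.antisymm _ subset_closure
    calc closure ((C \ B) ∪ K) = closure (C \ B) ∪ closure K := closure_union
      _ ⊆ ((C \ B) ∪ K) ∪ K := by
          apply Set.union_subset_union hclos
          rw [hKclosed.closure_eq]
      _ = (C \ B) ∪ K := by rw [Set.union_assoc, Set.union_self]
  have hC'sub : C' ⊆ C ∪ K := by
    rw [hC']
    exact Set.union_subset_union Set.diff_subset subset_rfl
  have hC'comp : IsCompact C' := (hCc.union hKcomp).of_isClosed_subset hC'closed hC'sub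
  -- nonempty
  obtain ⟨y₀, hy₀⟩ := hFne
  have hx₀K : x₀ ∈ K := by
    simp only [hK, Set.mem_iUnion]
    exact ⟨y₀, hy₀, left_mem_segment ℝ x₀ y₀⟩
  have hC'ne : C'.Nonempty := ⟨x₀, by rw [hC']; right; simpa [hK] using hx₀K⟩
  -- K is preconnected
  have hKconn : IsPreconnected K := by
    have heq : K = ⋃₀ ((fun y => segment ℝ x₀ y) '' (F : Set X)) := by
      ext z; simp [hK]
    rw [heq]
    apply isPreconnected_sUnion x₀
    · rintro s ⟨y, _, rfl⟩; exact left_mem_segment ℝ x₀ y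
    · rintro s ⟨y, _, rfl⟩; exact (convex_segment x₀ y).isPreconnected
  have hCBsub : C \ B ⊆ C' := by rw [hC']; exact Set.subset_union_left
  have hKsub : K ⊆ C' := by rw [hC']; exact Set.subset_union_right
  -- helper for connectedness
  have helper : ∀ u v : Set X, IsOpen u → IsOpen v → C' ⊆ u ∪ v →
      (C' ∩ v).Nonempty → C' ∩ (u ∩ v) = ∅ → K ⊆ u → False := by
    intro u v hu hv hcov ⟨c, hcC', hcv⟩ hempty hKu
    have hcCB : c ∈ C \ B := by
      rw [hC'] at hcC'
      rcases hcC' with h | h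
      · exact h
      · exfalso
        have hcK : c ∈ K := by rwa [hK]
        have : c ∈ C' ∩ (u ∩ v) := ⟨hKsub hcK, hKu hcK, hcv⟩
        rw [hempty] at this; exact this
    -- separate C with A = v ∩ Bᶜ and Q = u ∪ ball x r
    have hsep := hCconn.isPreconnected (v ∩ Bᶜ) (u ∪ Metric.ball x r)
      (hv.inter (Metric.isClosed_closedBall.isOpen_compl))
      (hu.union Metric.isOpen_ball)
      (by
        intro c' hc'
        rcases lt_trichotomy (dist c' x) r with h | h | h
        · right; right; exact Metric.mem_ball.mpr h
        · right; left
          apply hKu; apply hFK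
          rw [hF]
          exact ⟨hc', Metric.mem_sphere.mpr h⟩
        · have hc'B : c' ∉ B := fun hm => absurd (Metric.mem_closedBall.mp hm) (not_le.mpr h)
          have : c' ∈ C' := hCBsub ⟨hc', hc'B⟩
          rcases hcov this with hh | hh
          · right; left; exact hh
          · left; exact ⟨hh, hc'B⟩)
      ⟨c, hcCB.1, hcv, hcCB.2⟩
      ⟨x, hx, Or.inr (Metric.mem_ball.mpr (by simpa using hr))⟩
    obtain ⟨z, hzC, ⟨hzv, hzB⟩, hzQ⟩ := hsep
    have hzu : z ∈ u := by
      rcases hzQ with h | h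
      · exact h
      · exact absurd (Metric.ball_subset_closedBall h) hzB
    have : z ∈ C' ∩ (u ∩ v) := ⟨hCBsub ⟨hzC, hzB⟩, hzu, hzv⟩
    rw [hempty] at this; exact this
  refine ⟨hC'comp, ⟨hC'ne, ?_⟩, ?_⟩
  · -- preconnected
    intro u v hu hv hcov hne_u hne_v
    by_contra hemp
    rw [Set.not_nonempty_iff_eq_empty] at hemp
    have hemp' : C' ∩ (u ∩ v) = ∅ := hemp
    have hKcov : K ⊆ u ∪ v := hKsub.trans hcov
    have hKdisj : ¬ ((K ∩ u).Nonempty ∧ (K ∩ v).Nonempty) := by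
      rintro ⟨h1, h2⟩
      obtain ⟨z, hz, hzu, hzv⟩ := hKconn u v hu hv hKcov h1 h2
      have : z ∈ C' ∩ (u ∩ v) := ⟨hKsub hz, hzu, hzv⟩
      rw [hemp'] at this; exact this
    rcases Set.eq_empty_or_nonempty (K ∩ u) with hKu | hKu
    · -- K ⊆ v; apply helper with roles swapped
      have hKv : K ⊆ v := by
        intro z hz
        rcases hKcov hz with h | h
        · exfalso; have : z ∈ K ∩ u := ⟨hz, h⟩; rw [hKu] at this; exact this
        · exact h
      exact helper v u hv hu (by rwa [Set.union_comm]) hne_u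
        (by rw [← hemp']; ext z; simp [and_comm, and_left_comm]) hKv
    · rcases Set.eq_empty_or_nonempty (K ∩ v) with hKv | hKv
      · have hKu' : K ⊆ u := by
          intro z hz
          rcases hKcov hz with h | h
          · exact h
          · exfalso; have : z ∈ K ∩ v := ⟨hz, h⟩; rw [hKv] at this; exact this
        exact helper u v hu hv hcov hne_v hemp' hKu'
      · exact hKdisj ⟨hKu, hKv⟩
  · -- C' \ B = C \ B
    apply Set.Subset.antisymm
    · intro z ⟨hz, hzB⟩
      rw [hC'] at hz
      rcases hz with h | h
      · exact h
      · exact absurd (hKB (by rwa [hK])) hzB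
    · intro z hz
      exact ⟨hCBsub hz, hz.2⟩
end

section
/- Let X be a separable Banach space, U ⊆ X open, ξ a Dini gauge with mean slope ζ(r) = ∫₀^r ξ(ρ)/ρ dρ, r₀ > 0, and let C ⊆ X be a compact connected set which is (ξ,r₀) almost minimizing in U. Then for every x ∈ C ∩ U, the function r ↦ exp(ζ(r)) · H^1(C ∩ B(x,r)) / (2r) is nondecreasing on (0, min{r₀, dist(x, X\\U)}). -/
open MeasureTheory

/-- A Dini gauge: a gauge whose mean slope `∫₀^r ξ(ρ)/ρ dρ` is finite for each `r > 0`. -/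
def IsDiniGauge (ξ : ℝ → ℝ) : Prop :=
  IsGauge ξ ∧ ∀ r : ℝ, 0 < r → IntegrableOn (fun ρ => ξ ρ / ρ) (Set.Ioc 0 r)

/-!
Write `m r = μH[1] (C ∩ closedBall x r)` and `N r` for the number of points of `C` on the sphere
of radius `r` about `x`. Replacing `C ∩ closedBall x r` by the cone from `x` over these points gives
an admissible competitor (it stays connected because every component of `C \ ball x r` reaches the
sphere), so almost minimality yields `m r ≤ (1 + ξ r) * r * N r`. Eilenberg's inequality for the
1-Lipschitz function `dist · x` gives `∫ t in a..b, N t ≤ m b - m a`. Combined, and using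
`1 / (1 + ξ) ≥ 1 - ξ`, this is the differential inequality `(log m)' ≥ (1 - ξ r) / r`, which
integrates over fine partitions to `log m r₂ - log m r₁ ≥ log (r₂ / r₁) - (ζ r₂ - ζ r₁)`.
-/

open Set Metric Filter Topology
open scoped ENNReal

theorem le_of_forall_sub_mul_sq_le {φ : ℝ → ℝ} {a b K : ℝ} (hab : a ≤ b)
    (h : ∀ s t, a ≤ s → s ≤ t → t ≤ b → φ s - K * (t - s) ^ 2 ≤ φ t) : φ a ≤ φ b := by
  have partition : ∀ n : ℕ, 0 < n → φ a - K * (b - a) ^ 2 / n ≤ φ b := by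
    intro n hn
    set δ := (b - a) / n with hδ
    have hδ0 : 0 ≤ δ := div_nonneg (sub_nonneg.2 hab) n.cast_nonneg
    have hnδ : n * δ = b - a := by rw [hδ]; field_simp
    have step : ∀ i ≤ n, φ a - i * (K * δ ^ 2) ≤ φ (a + i * δ) := by
      intro i hi
      induction i with
      | zero => simp
      | succ i ih =>
        have hi' : ((i + 1 : ℕ) : ℝ) ≤ n := by exact_mod_cast hi
        push_cast at hi' ⊢
        have := h (a + i * δ) (a + (i + 1) * δ) (by nlinarith) (by nlinarith) (by nlinarith)
        have hsq : (a + (i + 1) * δ - (a + i * δ)) ^ 2 = δ ^ 2 := by ring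
        linarith [ih (by omega)]
    have := step n le_rfl
    rw [hnδ, add_sub_cancel] at this
    have hK : (n : ℝ) * (K * δ ^ 2) = K * (b - a) ^ 2 / n := by
      rw [← hnδ]; field_simp
    linarith
  have hlim : Tendsto (fun n : ℕ => φ a - K * (b - a) ^ 2 / n) atTop (𝓝 (φ a)) := by
    simpa using tendsto_const_nhds.sub (tendsto_const_div_atTop_nhds_zero_nat (K * (b - a) ^ 2))
  exact le_of_tendsto hlim (eventually_atTop.2 ⟨1, fun n hn => partition n hn⟩)

theorem sub_sq_le_log_one_add {u : ℝ} (hu : 0 ≤ u) : u - u ^ 2 ≤ Real.log (1 + u) := by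
  have h := Real.one_sub_inv_le_log_of_pos (x := 1 + u) (by linarith)
  have : u - u ^ 2 ≤ 1 - (1 + u)⁻¹ := by
    rw [← sub_nonneg]
    have : 1 - (1 + u)⁻¹ - (u - u ^ 2) = u ^ 3 / (1 + u) := by field_simp; ring
    rw [this]; positivity
  linarith

theorem integral_le_log_sub_log_of_forall_mul_integral_le {M g : ℝ → ℝ} {a b W : ℝ}
    (hab : a ≤ b) (hM : ∀ t ∈ Icc a b, 0 < M t) (hg : ∀ t ∈ Icc a b, 0 ≤ g t ∧ g t ≤ W)
    (hgi : IntervalIntegrable g volume a b)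
    (h : ∀ s t, a ≤ s → s ≤ t → t ≤ b → M s * ∫ τ in s..t, g τ ≤ M t - M s) :
    ∫ τ in a..b, g τ ≤ Real.log (M b) - Real.log (M a) := by
  suffices Real.log (M a) - ∫ τ in a..a, g τ ≤ Real.log (M b) - ∫ τ in a..b, g τ by
    rw [intervalIntegral.integral_same] at this; linarith
  -- `log M - ∫ g` can only drop by `O((t - s) ^ 2)` on `[s, t]`, since `log (1 + u) ≥ u - u ^ 2`
  refine le_of_forall_sub_mul_sq_le (φ := fun t => Real.log (M t) - ∫ τ in a..t, g τ)
    (K := W ^ 2) hab fun s t has hst htb => ?_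
  have hgi' : ∀ {c d}, a ≤ c → c ≤ d → d ≤ b → IntervalIntegrable g volume c d :=
    fun hc hcd hd => hgi.mono_set <| by
      rw [uIcc_of_le hab, uIcc_of_le hcd]; exact Icc_subset_Icc hc hd
  set u := ∫ τ in s..t, g τ
  have hu0 : 0 ≤ u := intervalIntegral.integral_nonneg hst
    fun τ hτ => (hg τ ⟨has.trans hτ.1, hτ.2.trans htb⟩).1
  have huW : u ≤ W * (t - s) := by
    have := intervalIntegral.norm_integral_le_of_norm_le_const (a := s) (b := t) (C := W) (f := g)
      fun τ hτ => by
        rw [uIoc_of_le hst] at hτ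
        have := hg τ ⟨has.trans hτ.1.le, hτ.2.trans htb⟩
        rw [Real.norm_eq_abs, abs_of_nonneg this.1]; exact this.2
    rw [abs_of_nonneg (sub_nonneg.2 hst)] at this
    exact (le_abs_self u).trans this
  have hMs := hM s ⟨has, hst.trans htb⟩
  have hlog : Real.log (M s) + (u - u ^ 2) ≤ Real.log (M t) :=
    calc Real.log (M s) + (u - u ^ 2) ≤ Real.log (M s) + Real.log (1 + u) := by
          gcongr; exact sub_sq_le_log_one_add hu0
      _ = Real.log (M s * (1 + u)) := (Real.log_mul hMs.ne' (by positivity)).symm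
      _ ≤ Real.log (M t) := Real.log_le_log (by positivity) (by linarith [h s t has hst htb])
  have hadd : (∫ τ in a..s, g τ) + u = ∫ τ in a..t, g τ :=
    intervalIntegral.integral_add_adjacent_intervals (hgi' le_rfl has (hst.trans htb))
      (hgi' has hst htb)
  have hsq : u ^ 2 ≤ W ^ 2 * (t - s) ^ 2 := by
    rw [← mul_pow]; exact pow_le_pow_left₀ hu0 huW 2
  linarith

theorem Set.encard_le_of_forall_finset_card_le {α : Type*} {s : Set α} {c : ℝ≥0∞}
    (h : ∀ F : Finset α, ↑F ⊆ s → (F.card : ℝ≥0∞) ≤ c) : (s.encard : ℝ≥0∞) ≤ c := by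
  by_cases hs : s.Finite
  · rw [hs.encard_eq_coe_toFinset_card]
    simpa using h hs.toFinset (by simp)
  · refine (le_top).trans (top_le_iff.2 (ENNReal.eq_top_of_forall_nnreal_le fun r => ?_))
    obtain ⟨F, hF, hcard⟩ := Set.Infinite.exists_subset_card_eq hs ⌈r⌉₊
    calc (r : ℝ≥0∞) ≤ (⌈r⌉₊ : ℝ≥0∞) := by exact_mod_cast Nat.le_ceil r
      _ = F.card := by rw [hcard]
      _ ≤ c := h F hF

theorem exists_cover_tsum_ediam_le {X : Type*} [EMetricSpace X] [MeasurableSpace X]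
    [BorelSpace X] {A : Set X} (hA : μH[1] A ≠ ∞) {δ : ℝ≥0∞} (hδ : 0 < δ) :
    ∃ c : ℕ → Set X, A ⊆ ⋃ i, c i ∧ (∀ i, ediam (c i) ≤ δ) ∧
      ∑' i, ediam (c i) ≤ μH[1] A + δ := by
  have hlt : (⨅ (c : ℕ → Set X) (_ : A ⊆ ⋃ i, c i) (_ : ∀ i, ediam (c i) ≤ δ),
      ∑' i, ⨆ _ : (c i).Nonempty, ediam (c i) ^ (1 : ℝ)) < μH[1] A + δ := by
    refine lt_of_le_of_lt ?_ (ENNReal.lt_add_right hA hδ.ne')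
    rw [Measure.hausdorffMeasure_apply]
    exact le_iSup₂ (f := fun r (_ : 0 < r) => ⨅ (c : ℕ → Set X) (_ : A ⊆ ⋃ i, c i)
      (_ : ∀ i, ediam (c i) ≤ r), ∑' i, ⨆ _ : (c i).Nonempty, ediam (c i) ^ (1 : ℝ)) δ hδ
  simp only [iInf_lt_iff] at hlt
  obtain ⟨c, hcA, hcδ, hsum⟩ := hlt
  refine ⟨c, hcA, hcδ, le_trans (le_of_eq (tsum_congr fun i => ?_)) hsum.le⟩
  rcases (c i).eq_empty_or_nonempty with hc | hc <;> simp [hc]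

theorem card_le_tsum_indicator_of_cover {X : Type*} [EMetricSpace X] {A : Set X} {f : X → ℝ}
    {c : ℕ → Set X} {J : ℕ → Set ℝ} {δ : ℝ≥0∞} (hcA : A ⊆ ⋃ i, c i)
    (hcδ : ∀ i, ediam (c i) ≤ δ) (hJ : ∀ i, f '' c i ⊆ J i) {F : Finset X} {t : ℝ}
    (hF : ↑F ⊆ A ∩ f ⁻¹' {t}) (hsep : ∀ p ∈ F, ∀ q ∈ F, p ≠ q → δ < edist p q) :
    (F.card : ℝ≥0∞) ≤ ∑' i, (J i).indicator 1 t := by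
  choose! ι hι using fun y (hy : y ∈ F) => mem_iUnion.1 (hcA (hF hy).1)
  have hinj : InjOn ι F := fun p hp q hq hpq => by
    by_contra hne
    exact (hsep p hp q hq hne).not_ge
      ((edist_le_ediam_of_mem (hι p hp) (hpq ▸ hι q hq)).trans (hcδ _))
  have hmem : ∀ y ∈ F, t ∈ J (ι y) := fun y hy => hJ _ ⟨y, hι y hy, (hF hy).2⟩
  calc (F.card : ℝ≥0∞) = ∑ i ∈ F.image ι, (J i).indicator 1 t := by
        rw [Finset.sum_image hinj, Finset.card_eq_sum_ones, Nat.cast_sum]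
        exact Finset.sum_congr rfl fun y hy => by simp [indicator_of_mem (hmem y hy)]
    _ ≤ ∑' i, (J i).indicator 1 t := ENNReal.sum_le_tsum _

/-- Eilenberg's inequality. -/
theorem lintegral_encard_inter_preimage_le {X : Type*} [EMetricSpace X] [MeasurableSpace X]
    [BorelSpace X] (A : Set X) {f : X → ℝ} (hf : LipschitzWith 1 f) :
    ∫⁻ t, ((A ∩ f ⁻¹' {t}).encard : ℝ≥0∞) ≤ μH[1] A := by
  by_cases hA : μH[1] A = ∞
  · simp [hA]
  set δ : ℕ → ℝ≥0∞ := fun n => (n : ℝ≥0∞)⁻¹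
  choose c hcA hcδ hcsum using fun n =>
    exists_cover_tsum_ediam_le hA (ENNReal.inv_pos.2 (ENNReal.natCast_ne_top n))
  -- the images `f '' c n i` need not be measurable
  set J : ℕ → ℕ → Set ℝ := fun n i => toMeasurable volume (f '' c n i)
  set g : ℕ → ℝ → ℝ≥0∞ := fun n t => ∑' i, (J n i).indicator 1 t
  have hg_meas : ∀ n, Measurable (g n) := fun n =>
    Measurable.tsum fun i => measurable_one.indicator (measurableSet_toMeasurable _ _)
  have hg_int : ∀ n, ∫⁻ t, g n t ≤ μH[1] A + δ n := by
    intro n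
    rw [lintegral_tsum fun i =>
      (measurable_one.indicator (measurableSet_toMeasurable _ _)).aemeasurable]
    calc ∑' i, ∫⁻ t, (J n i).indicator 1 t = ∑' i, volume (f '' c n i) := by
          simp [J, lintegral_indicator_one (measurableSet_toMeasurable _ _)]
      _ ≤ ∑' i, ediam (c n i) := ENNReal.tsum_le_tsum fun i =>
          (Real.volume_le_diam _).trans (by simpa using hf.ediam_image_le (c n i))
      _ ≤ μH[1] A + δ n := hcsum n
  have hg_count : ∀ t, ((A ∩ f ⁻¹' {t}).encard : ℝ≥0∞) ≤ liminf (fun n => g n t) atTop := by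
    refine fun t => Set.encard_le_of_forall_finset_card_le fun F hF => ?_
    have hsep : ∀ᶠ n in atTop, ∀ p ∈ F, ∀ q ∈ F, p ≠ q → δ n < edist p q := by
      simp only [eventually_all_finset]
      refine fun p _ q _ => (eq_or_ne p q).elim (fun hpq => by simp [hpq]) fun hpq => ?_
      exact (ENNReal.tendsto_inv_nat_nhds_zero.eventually (gt_mem_nhds (edist_pos.2 hpq))).mono
        fun n hn _ => hn
    refine le_liminf_of_le (by isBoundedDefault) ?_
    filter_upwards [hsep] with n hn
    exact card_le_tsum_indicator_of_cover (hcA n) (hcδ n)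
      (fun i => subset_toMeasurable _ _) hF hn
  have hlim : Tendsto (fun n => μH[1] A + δ n) atTop (𝓝 (μH[1] A)) := by
    simpa using tendsto_const_nhds.add ENNReal.tendsto_inv_nat_nhds_zero
  calc ∫⁻ t, ((A ∩ f ⁻¹' {t}).encard : ℝ≥0∞)
      ≤ ∫⁻ t, liminf (fun n => g n t) atTop := lintegral_mono hg_count
    _ ≤ liminf (fun n => ∫⁻ t, g n t) atTop := lintegral_liminf_le hg_meas
    _ ≤ liminf (fun n => μH[1] A + δ n) atTop := liminf_le_liminf (Eventually.of_forall hg_int)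
    _ = μH[1] A := hlim.liminf_eq

theorem exists_isClopen_mem_disjoint_of_disjoint_connectedComponent {α : Type*}
    [TopologicalSpace α] [CompactSpace α] [T2Space α] {K : Set α} (hK : IsClosed K) {z : α}
    (hzK : Disjoint (connectedComponent z) K) : ∃ V, IsClopen V ∧ z ∈ V ∧ Disjoint V K := by
  set π : α → ConnectedComponents α := ConnectedComponents.mk
  have hπK : IsClosed (π '' K) :=
    (hK.isCompact.image ConnectedComponents.continuous_coe).isClosed
  have hz : π z ∉ π '' K := by
    rintro ⟨w, hwK, hw⟩
    exact hzK.notMem_of_mem_left (ConnectedComponents.coe_eq_coe'.1 hw) hwK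
  obtain ⟨W, hW, hzW, hWK⟩ := compact_exists_isClopen_in_isOpen hπK.isOpen_compl hz
  exact ⟨π ⁻¹' W, hW.preimage ConnectedComponents.continuous_coe, hzW,
    disjoint_left.2 fun w hwW hwK => hWK hwW ⟨w, hwK, rfl⟩⟩

/-- Boundary bumping. -/
theorem connectedComponentIn_diff_inter_closure_nonempty {α : Type*}
    [TopologicalSpace α] [T2Space α] {C U : Set α} (hC : IsCompact C) (hCc : IsPreconnected C)
    (hU : IsOpen U) (hCU : (C ∩ U).Nonempty) {z : α} (hz : z ∈ C \ U) :
    (connectedComponentIn (C \ U) z ∩ closure U).Nonempty := by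
  by_contra hdisj
  set F := C \ U
  have : CompactSpace F := isCompact_iff_compactSpace.1 (hC.diff hU)
  set z' : F := ⟨z, hz⟩
  obtain ⟨V, hV, hzV, hVU⟩ := exists_isClopen_mem_disjoint_of_disjoint_connectedComponent
    (isClosed_closure.preimage continuous_subtype_val) (K := (↑) ⁻¹' closure U) (z := z') <| by
      refine disjoint_left.2 fun w hw hwU => hdisj ⟨w, ?_, hwU⟩
      rw [connectedComponentIn_eq_image hz]
      exact mem_image_of_mem _ hw
  obtain ⟨O, hO, hOV⟩ := isOpen_induced_iff.1 hV.isOpen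
  set A : Set α := (↑) '' V
  have hA : IsClosed A := (hV.isClosed.isCompact.image continuous_subtype_val).isClosed
  have hAO : A ⊆ O \ closure U := by
    rintro _ ⟨w, hwV, rfl⟩
    exact ⟨by rw [← hOV] at hwV; exact hwV, fun hwU => hVU.notMem_of_mem_left hwV hwU⟩
  have hcover : C ⊆ A ∪ (C \ (O \ closure U)) := by
    intro w hwC
    by_cases hw : w ∈ O \ closure U
    · have hwF : w ∈ F := ⟨hwC, fun hwU => hw.2 (subset_closure hwU)⟩
      exact Or.inl ⟨⟨w, hwF⟩, by rw [← hOV]; exact hw.1, rfl⟩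
    · exact Or.inr ⟨hwC, hw⟩
  rcases isPreconnected_iff_subset_of_disjoint_closed.1 hCc A (C \ (O \ closure U)) hA
      (hC.isClosed.sdiff (hO.sdiff isClosed_closure)) hcover
      (eq_empty_iff_forall_notMem.2 fun w ⟨_, hwA, hw⟩ => hw.2 (hAO hwA)) with hCA | hCA
  · obtain ⟨w, hwC, hwU⟩ := hCU
    obtain ⟨w', hw'V, rfl⟩ := hCA hwC
    exact w'.2.2 hwU
  · exact (hCA hz.1).2 (hAO ⟨z', hzV, rfl⟩)

theorem isCompact_segment {E : Type*} [NormedAddCommGroup E] [NormedSpace ℝ E] (x y : E) :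
    IsCompact (segment ℝ x y) := by
  rw [segment_eq_image_lineMap]
  exact isCompact_Icc.image AffineMap.lineMap_continuous

theorem isPreconnected_insert_diff_ball_union_cone {E : Type*} [NormedAddCommGroup E]
    [NormedSpace ℝ E] {C : Set E} (hC : IsCompact C) (hCc : IsPreconnected C) {x : E}
    (hx : x ∈ C) {t : ℝ} (ht : 0 < t) :
    IsPreconnected (insert x ((C \ ball x t) ∪ ⋃ y ∈ C ∩ sphere x t, segment ℝ x y)) := by
  have hseg : ∀ y ∈ C ∩ sphere x t,
      segment ℝ x y ⊆ insert x ((C \ ball x t) ∪ ⋃ y ∈ C ∩ sphere x t, segment ℝ x y) :=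
    fun y hy => (subset_biUnion_of_mem (u := fun y => segment ℝ x y) hy).trans
      (subset_union_right.trans (subset_insert _ _))
  refine isPreconnected_of_forall x fun w hw => ?_
  rcases hw with rfl | hw | hw
  · exact ⟨{w}, by simp, rfl, rfl, isPreconnected_singleton⟩
  · obtain ⟨y, hyK, hyU⟩ := connectedComponentIn_diff_inter_closure_nonempty hC hCc isOpen_ball
      ⟨x, hx, mem_ball_self ht⟩ hw
    have hyC := connectedComponentIn_subset _ _ hyK
    have hyS : y ∈ C ∩ sphere x t := ⟨hyC.1, le_antisymm (closure_ball_subset_closedBall hyU)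
      (not_lt.1 fun h => hyC.2 (mem_ball.2 h))⟩
    refine ⟨connectedComponentIn (C \ ball x t) w ∪ segment ℝ x y,
      union_subset ((connectedComponentIn_subset _ _).trans
        (subset_union_left.trans (subset_insert _ _))) (hseg y hyS),
      Or.inr (left_mem_segment ℝ x y), Or.inl (mem_connectedComponentIn hw),
      isPreconnected_connectedComponentIn.union y hyK (right_mem_segment ℝ x y)
        (convex_segment x y).isPreconnected⟩
  · obtain ⟨y, hy, hwy⟩ := mem_iUnion₂.1 hw
    exact ⟨segment ℝ x y, hseg y hy, left_mem_segment ℝ x y, hwy,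
      (convex_segment x y).isPreconnected⟩

theorem exists_cone_competitor {E : Type*} [NormedAddCommGroup E] [NormedSpace ℝ E]
    [MeasurableSpace E] [BorelSpace E] {C : Set E} (hC : IsCompact C) (hCc : IsPreconnected C)
    {x : E} (hx : x ∈ C) {t : ℝ} (ht : 0 < t) (hS : (C ∩ sphere x t).Finite) :
    ∃ C' : Set E, IsCompact C' ∧ IsConnected C' ∧
      C' \ closedBall x t = C \ closedBall x t ∧
      μH[1] (C' ∩ closedBall x t) ≤ (C ∩ sphere x t).encard * ENNReal.ofReal t := by
  set S := C ∩ sphere x t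
  set cone := ⋃ y ∈ S, segment ℝ x y
  have hcone_ball : cone ⊆ closedBall x t := iUnion₂_subset fun y hy =>
    (convex_closedBall x t).segment_subset (mem_closedBall_self ht.le)
      (sphere_subset_closedBall hy.2)
  refine ⟨insert x ((C \ ball x t) ∪ cone), ?_,
    ⟨⟨x, mem_insert _ _⟩, isPreconnected_insert_diff_ball_union_cone hC hCc hx ht⟩, ?_, ?_⟩
  · exact ((hC.diff isOpen_ball).union
      (hS.isCompact_biUnion fun y _ => isCompact_segment x y)).insert x
  · ext w
    constructor
    · rintro ⟨hw | hw | hw, hwB⟩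
      · exact absurd (hw ▸ mem_closedBall_self ht.le) hwB
      · exact ⟨hw.1, hwB⟩
      · exact absurd (hcone_ball hw) hwB
    · rintro ⟨hwC, hwB⟩
      exact ⟨Or.inr (Or.inl ⟨hwC, fun h => hwB (ball_subset_closedBall h)⟩), hwB⟩
  · have := Measure.nullSingletonClass_hausdorff E (d := 1) one_pos
    have hsub : insert x ((C \ ball x t) ∪ cone) ∩ closedBall x t ⊆ insert x cone := by
      rintro w ⟨hw | hw | hw, hwB⟩
      · exact Or.inl hw
      · have hwS : w ∈ S := ⟨hw.1, le_antisymm (mem_closedBall.1 hwB)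
          (not_lt.1 fun h => hw.2 (mem_ball.2 h))⟩
        exact Or.inr (mem_biUnion hwS (right_mem_segment ℝ x w))
      · exact Or.inr hw
    calc μH[1] (insert x ((C \ ball x t) ∪ cone) ∩ closedBall x t)
        ≤ μH[1] cone := (measure_mono hsub).trans (measure_congr (insert_ae_eq_self x cone)).le
      _ ≤ ∑' y : S, μH[1] (segment ℝ x y) := measure_biUnion_le _ hS.countable _
      _ = ∑' _ : S, ENNReal.ofReal t := tsum_congr fun y => by
          rw [hausdorffMeasure_segment, edist_dist, dist_comm, y.2.2]
      _ = S.encard * ENNReal.ofReal t := ENNReal.tsum_set_const S _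

theorem intervalIntegrable_inv_of_pos {a b : ℝ} (ha : 0 < a) (hab : a ≤ b) :
    IntervalIntegrable (fun t : ℝ => t⁻¹) volume a b :=
  intervalIntegrable_inv_iff.2 (Or.inr fun h => (ha.trans_le (uIcc_of_le hab ▸ h).1).false)

theorem IsDiniGauge.intervalIntegrable_div {ξ : ℝ → ℝ} (hξ : IsDiniGauge ξ) {a b : ℝ}
    (ha : 0 ≤ a) (hab : a ≤ b) : IntervalIntegrable (fun t => ξ t / t) volume a b := by
  rcases hab.eq_or_lt with rfl | hab'
  · exact IntervalIntegrable.refl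
  · exact (intervalIntegrable_iff_integrableOn_Ioc_of_le hab).2
      ((hξ.2 b (ha.trans_lt hab')).mono_set (Ioc_subset_Ioc_left ha))

theorem IsDiniGauge.intervalIntegrable_one_sub_div {ξ : ℝ → ℝ} (hξ : IsDiniGauge ξ) {a b : ℝ}
    (ha : 0 < a) (hab : a ≤ b) : IntervalIntegrable (fun t => (1 - ξ t) / t) volume a b := by
  simpa only [sub_div, one_div] using
    (intervalIntegrable_inv_of_pos ha hab).sub (hξ.intervalIntegrable_div ha.le hab)

theorem IsDiniGauge.integral_one_sub_div {ξ : ℝ → ℝ} (hξ : IsDiniGauge ξ) {a b : ℝ}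
    (ha : 0 < a) (hab : a ≤ b) :
    ∫ t in a..b, (1 - ξ t) / t = Real.log b - Real.log a -
      ((∫ ρ in Ioc 0 b, ξ ρ / ρ) - ∫ ρ in Ioc 0 a, ξ ρ / ρ) := by
  have hb := ha.trans_le hab
  simp only [sub_div, one_div]
  rw [intervalIntegral.integral_sub (intervalIntegrable_inv_of_pos ha hab)
      (hξ.intervalIntegrable_div ha.le hab), integral_inv_of_pos ha hb,
    Real.log_div hb.ne' ha.ne', ← intervalIntegral.integral_of_le hb.le,
    ← intervalIntegral.integral_of_le ha.le,
    intervalIntegral.integral_interval_sub_left (hξ.intervalIntegrable_div le_rfl hb.le)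
      (hξ.intervalIntegrable_div le_rfl ha.le)]

theorem lintegral_encard_inter_sphere_le {X : Type*} [MetricSpace X] [MeasurableSpace X]
    [BorelSpace X] (C : Set X) (x : X) {a b : ℝ} (hab : a ≤ b)
    (ha : μH[1] (C ∩ closedBall x a) ≠ ∞) :
    ∫⁻ t in Ioc a b, ((C ∩ sphere x t).encard : ℝ≥0∞) ≤
      μH[1] (C ∩ closedBall x b) - μH[1] (C ∩ closedBall x a) := by
  set A := (C ∩ closedBall x b) \ closedBall x a
  have hlevel : ∀ t ∈ Ioc a b, A ∩ (dist · x) ⁻¹' {t} = C ∩ sphere x t := by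
    intro t ht
    ext y
    simp only [A, mem_inter_iff, Set.mem_sdiff, mem_closedBall, mem_preimage, mem_singleton_iff,
      mem_sphere]
    constructor
    · rintro ⟨⟨⟨hyC, -⟩, -⟩, hy⟩
      exact ⟨hyC, hy⟩
    · rintro ⟨hyC, hy⟩
      rw [hy]
      exact ⟨⟨⟨hyC, ht.2⟩, not_le.2 ht.1⟩, rfl⟩
  have hsplit : μH[1] (C ∩ closedBall x a) + μH[1] A = μH[1] (C ∩ closedBall x b) := by
    rw [← measure_inter_add_sdiff (C ∩ closedBall x b) measurableSet_closedBall, inter_assoc,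
      inter_eq_self_of_subset_right (closedBall_subset_closedBall hab)]
  calc ∫⁻ t in Ioc a b, ((C ∩ sphere x t).encard : ℝ≥0∞)
      = ∫⁻ t in Ioc a b, ((A ∩ (dist · x) ⁻¹' {t}).encard : ℝ≥0∞) :=
        setLIntegral_congr_fun measurableSet_Ioc fun t ht => by rw [hlevel t ht]
    _ ≤ ∫⁻ t, ((A ∩ (dist · x) ⁻¹' {t}).encard : ℝ≥0∞) := setLIntegral_le_lintegral _ _
    _ ≤ μH[1] A := lintegral_encard_inter_preimage_le A (LipschitzWith.dist_left x)
    _ ≤ _ := ENNReal.le_sub_of_add_le_left ha hsplit.le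

namespace AlmostMinimizing

variable {X : Type*} [NormedAddCommGroup X] [NormedSpace ℝ X] [MeasurableSpace X] [BorelSpace X]
  {ξ : ℝ → ℝ} {r₀ : ℝ} {U C : Set X} {x : X}

theorem measure_inter_closedBall_ne_top (hC : AlmostMinimizing ξ r₀ U C) (x : X) (t : ℝ) :
    μH[1] (C ∩ closedBall x t) ≠ ∞ :=
  ((measure_mono inter_subset_left).trans_lt hC.2.2.1).ne

theorem measure_inter_closedBall_le (hC : AlmostMinimizing ξ r₀ U C) (hx : x ∈ C ∩ U) {t : ℝ}
    (ht : 0 < t) (htr : t ≤ r₀) (htU : closedBall x t ⊆ U) (hξ : 0 ≤ ξ t) :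
    μH[1] (C ∩ closedBall x t) ≤ ENNReal.ofReal ((1 + ξ t) * t) * (C ∩ sphere x t).encard := by
  obtain ⟨hCc, hCconn, -, hmin⟩ := hC
  by_cases hS : (C ∩ sphere x t).Finite
  · obtain ⟨C', hC'c, hC'conn, hC'eq, hC'μ⟩ :=
      exists_cone_competitor hCc hCconn.isPreconnected hx.1 ht hS
    calc μH[1] (C ∩ closedBall x t)
        ≤ ENNReal.ofReal (1 + ξ t) * μH[1] (C' ∩ closedBall x t) :=
          hmin x hx t ht htr htU C' hC'c hC'conn hC'eq
      _ ≤ ENNReal.ofReal (1 + ξ t) * ((C ∩ sphere x t).encard * ENNReal.ofReal t) := by gcongr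
      _ = _ := by rw [ENNReal.ofReal_mul (by linarith)]; ring
  · rw [Set.encard_eq_top_iff.2 hS, ENat.toENNReal_top,
      ENNReal.mul_top (ENNReal.ofReal_pos.2 (by positivity)).ne']
    exact le_top

theorem ofReal_mul_le_encard_inter_sphere (hC : AlmostMinimizing ξ r₀ U C) (hx : x ∈ C ∩ U)
    {s t : ℝ} (hst : s ≤ t) (ht : 0 < t) (htr : t ≤ r₀) (htU : closedBall x t ⊆ U)
    (hξ : 0 ≤ ξ t) :
    ENNReal.ofReal ((μH[1] (C ∩ closedBall x s)).toReal * max ((1 - ξ t) / t) 0) ≤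
      (C ∩ sphere x t).encard := by
  have hc : 0 < (1 + ξ t) * t := by positivity
  -- `1 / (1 + ξ) ≥ 1 - ξ` turns the almost-minimality factor into a linear loss
  have hw : max ((1 - ξ t) / t) 0 ≤ 1 / ((1 + ξ t) * t) :=
    max_le (by rw [div_le_div_iff₀ ht hc]; nlinarith [mul_nonneg (sq_nonneg (ξ t)) ht.le])
      (by positivity)
  calc ENNReal.ofReal ((μH[1] (C ∩ closedBall x s)).toReal * max ((1 - ξ t) / t) 0)
      ≤ ENNReal.ofReal ((μH[1] (C ∩ closedBall x s)).toReal / ((1 + ξ t) * t)) := by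
        rw [div_eq_mul_one_div (μH[1] (C ∩ closedBall x s)).toReal]
        exact ENNReal.ofReal_le_ofReal (mul_le_mul_of_nonneg_left hw ENNReal.toReal_nonneg)
    _ = μH[1] (C ∩ closedBall x s) / ENNReal.ofReal ((1 + ξ t) * t) := by
        rw [ENNReal.ofReal_div_of_pos hc,
          ENNReal.ofReal_toReal (hC.measure_inter_closedBall_ne_top x s)]
    _ ≤ (C ∩ sphere x t).encard := ENNReal.div_le_of_le_mul' <|
        (measure_mono (inter_subset_inter_right _ (closedBall_subset_closedBall hst))).trans
          (hC.measure_inter_closedBall_le hx ht htr htU hξ)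

theorem mul_integral_le_sub (hC : AlmostMinimizing ξ r₀ U C) (hξ : IsDiniGauge ξ)
    (hx : x ∈ C ∩ U) {a b : ℝ} (ha : 0 < a) (hab : a ≤ b) (hbr : b ≤ r₀)
    (hbU : closedBall x b ⊆ U) :
    (μH[1] (C ∩ closedBall x a)).toReal * ∫ t in a..b, max ((1 - ξ t) / t) 0 ≤
      (μH[1] (C ∩ closedBall x b)).toReal - (μH[1] (C ∩ closedBall x a)).toReal := by
  set m := fun t => μH[1] (C ∩ closedBall x t)
  have hw := hξ.intervalIntegrable_one_sub_div ha hab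
  rw [← intervalIntegral.integral_const_mul, intervalIntegral.integral_of_le hab,
    ← ENNReal.toReal_sub_of_le (measure_mono (inter_subset_inter_right _
      (closedBall_subset_closedBall hab))) (hC.measure_inter_closedBall_ne_top x b),
    ← ENNReal.ofReal_le_iff_le_toReal
      (ENNReal.sub_ne_top (hC.measure_inter_closedBall_ne_top x b))]
  calc ENNReal.ofReal (∫ t in Ioc a b, (m a).toReal * max ((1 - ξ t) / t) 0)
      = ∫⁻ t in Ioc a b, ENNReal.ofReal ((m a).toReal * max ((1 - ξ t) / t) 0) :=
        ofReal_integral_eq_lintegral_ofReal (hw.1.pos_part.const_mul _)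
          (ae_of_all _ fun t => by positivity)
    _ ≤ ∫⁻ t in Ioc a b, ((C ∩ sphere x t).encard : ℝ≥0∞) :=
        setLIntegral_mono' measurableSet_Ioc fun t ht =>
          hC.ofReal_mul_le_encard_inter_sphere hx ht.1.le (ha.trans ht.1) (ht.2.trans hbr)
            ((closedBall_subset_closedBall ht.2).trans hbU) (hξ.1.2.1 t (ha.trans ht.1))
    _ ≤ m b - m a :=
        lintegral_encard_inter_sphere_le C x hab (hC.measure_inter_closedBall_ne_top x a)

theorem integral_one_sub_div_le_log_sub_log (hC : AlmostMinimizing ξ r₀ U C)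
    (hξ : IsDiniGauge ξ) (hx : x ∈ C ∩ U) {r₁ r₂ : ℝ} (hr₁ : 0 < r₁) (h12 : r₁ ≤ r₂)
    (hr₂ : r₂ ≤ r₀) (hU : closedBall x r₂ ⊆ U) (hm : μH[1] (C ∩ closedBall x r₁) ≠ 0) :
    ∫ t in r₁..r₂, (1 - ξ t) / t ≤
      Real.log (μH[1] (C ∩ closedBall x r₂)).toReal -
        Real.log (μH[1] (C ∩ closedBall x r₁)).toReal := by
  have hw := hξ.intervalIntegrable_one_sub_div hr₁ h12
  have hw' : IntervalIntegrable (fun t => max ((1 - ξ t) / t) 0) volume r₁ r₂ :=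
    ⟨hw.1.pos_part, hw.2.pos_part⟩
  refine (intervalIntegral.integral_mono_on h12 hw hw' fun t _ => le_max_left _ _).trans ?_
  refine integral_le_log_sub_log_of_forall_mul_integral_le (W := r₁⁻¹) h12
    (fun t ht => ENNReal.toReal_pos ?_ (hC.measure_inter_closedBall_ne_top x t))
    (fun t ht => ⟨le_max_right _ _, max_le ?_ (by positivity)⟩) hw'
    fun s t hs hst ht => hC.mul_integral_le_sub hξ hx (hr₁.trans_le hs) hst (ht.trans hr₂)
      ((closedBall_subset_closedBall ht).trans hU)
  · exact ((pos_iff_ne_zero.2 hm).trans_le (measure_mono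
      (inter_subset_inter_right _ (closedBall_subset_closedBall ht.1)))).ne'
  · have ht0 := hr₁.trans_le ht.1
    calc (1 - ξ t) / t ≤ 1 / t := by gcongr; linarith [hξ.1.2.1 t ht0]
      _ ≤ r₁⁻¹ := by rw [one_div]; exact inv_anti₀ hr₁ ht.1

theorem exp_mul_measure_div_le (hC : AlmostMinimizing ξ r₀ U C) (hξ : IsDiniGauge ξ)
    (hx : x ∈ C ∩ U) {r₁ r₂ : ℝ} (hr₁ : 0 < r₁) (h12 : r₁ ≤ r₂) (hr₂ : r₂ ≤ r₀)
    (hU : closedBall x r₂ ⊆ U) :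
    ENNReal.ofReal (Real.exp (∫ ρ in Ioc 0 r₁, ξ ρ / ρ)) * μH[1] (C ∩ closedBall x r₁) /
        ENNReal.ofReal (2 * r₁) ≤
      ENNReal.ofReal (Real.exp (∫ ρ in Ioc 0 r₂, ξ ρ / ρ)) * μH[1] (C ∩ closedBall x r₂) /
        ENNReal.ofReal (2 * r₂) := by
  by_cases hm : μH[1] (C ∩ closedBall x r₁) = 0
  · simp [hm]
  have hlog := hC.integral_one_sub_div_le_log_sub_log hξ hx hr₁ h12 hr₂ hU hm
  rw [hξ.integral_one_sub_div hr₁ h12] at hlog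
  have hr₂pos := hr₁.trans_le h12
  have hM₁ : 0 < (μH[1] (C ∩ closedBall x r₁)).toReal :=
    ENNReal.toReal_pos hm (hC.measure_inter_closedBall_ne_top x r₁)
  have hM₂ : 0 < (μH[1] (C ∩ closedBall x r₂)).toReal :=
    ENNReal.toReal_pos (fun h => hm (measure_mono_null
      (inter_subset_inter_right _ (closedBall_subset_closedBall h12)) h))
      (hC.measure_inter_closedBall_ne_top x r₂)
  rw [← ENNReal.ofReal_toReal (hC.measure_inter_closedBall_ne_top x r₁),
    ← ENNReal.ofReal_toReal (hC.measure_inter_closedBall_ne_top x r₂),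
    ← ENNReal.ofReal_mul (Real.exp_pos _).le, ← ENNReal.ofReal_mul (Real.exp_pos _).le,
    ← ENNReal.ofReal_div_of_pos (by positivity), ← ENNReal.ofReal_div_of_pos (by positivity)]
  refine ENNReal.ofReal_le_ofReal ?_
  have h := Real.exp_le_exp.2 (by linarith : (∫ ρ in Ioc 0 r₁, ξ ρ / ρ) +
      Real.log (μH[1] (C ∩ closedBall x r₁)).toReal - Real.log r₁ ≤
    (∫ ρ in Ioc 0 r₂, ξ ρ / ρ) + Real.log (μH[1] (C ∩ closedBall x r₂)).toReal - Real.log r₂)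
  rw [Real.exp_sub, Real.exp_add, Real.exp_log hM₁, Real.exp_log hr₁, Real.exp_sub,
    Real.exp_add, Real.exp_log hM₂, Real.exp_log hr₂pos] at h
  rw [mul_comm 2 r₁, mul_comm 2 r₂, ← div_div, ← div_div]
  gcongr

end AlmostMinimizing

theorem stmt_10_general {X : Type*} [NormedAddCommGroup X] [NormedSpace ℝ X]
    [MeasurableSpace X] [BorelSpace X]
    (U : Set X) (ξ : ℝ → ℝ) (hξ : IsDiniGauge ξ)
    (ζ : ℝ → ℝ) (hζ : ∀ r : ℝ, ζ r = ∫ ρ in Set.Ioc (0:ℝ) r, ξ ρ / ρ)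
    (r₀ : ℝ) (C : Set X) (hC : AlmostMinimizing ξ r₀ U C)
    (x : X) (hx : x ∈ C ∩ U) :
    ∀ r₁ r₂ : ℝ, 0 < r₁ → r₁ ≤ r₂ →
      ENNReal.ofReal r₂ < min (ENNReal.ofReal r₀) (EMetric.infEdist x Uᶜ) →
      ENNReal.ofReal (Real.exp (ζ r₁)) * μH[1] (C ∩ Metric.closedBall x r₁) /
          ENNReal.ofReal (2 * r₁) ≤
        ENNReal.ofReal (Real.exp (ζ r₂)) * μH[1] (C ∩ Metric.closedBall x r₂) /
          ENNReal.ofReal (2 * r₂) := by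
  intro r₁ r₂ hr₁ h12 hlt
  obtain ⟨hr₂r₀, hr₂U⟩ := lt_min_iff.1 hlt
  have hball : closedBall x r₂ ⊆ U := fun y hy => by
    by_contra hyU
    rw [← closedEBall_ofReal (hr₁.le.trans h12)] at hy
    exact (disjoint_closedEBall_of_lt_infEDist hr₂U).notMem_of_mem_left hy hyU
  rw [hζ r₁, hζ r₂]
  exact hC.exp_mul_measure_div_le hξ hx hr₁ h12 (ENNReal.ofReal_lt_ofReal_iff'.1 hr₂r₀).1.le hball

theorem stmt_10 {X : Type*} [NormedAddCommGroup X] [NormedSpace ℝ X]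
    [TopologicalSpace.SeparableSpace X] [MeasurableSpace X] [BorelSpace X]
    (U : Set X) (hU : IsOpen U) (ξ : ℝ → ℝ) (hξ : IsDiniGauge ξ)
    (ζ : ℝ → ℝ) (hζ : ∀ r : ℝ, ζ r = ∫ ρ in Set.Ioc (0:ℝ) r, ξ ρ / ρ)
    (r₀ : ℝ) (hr₀ : 0 < r₀) (C : Set X) (hC : AlmostMinimizing ξ r₀ U C)
    (x : X) (hx : x ∈ C ∩ U) :
    ∀ r₁ r₂ : ℝ, 0 < r₁ → r₁ ≤ r₂ →
      ENNReal.ofReal r₂ < min (ENNReal.ofReal r₀) (EMetric.infEdist x Uᶜ) →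
      ENNReal.ofReal (Real.exp (ζ r₁)) * μH[1] (C ∩ Metric.closedBall x r₁) /
          ENNReal.ofReal (2 * r₁) ≤
        ENNReal.ofReal (Real.exp (ζ r₂)) * μH[1] (C ∩ Metric.closedBall x r₂) /
          ENNReal.ofReal (2 * r₂) :=
  stmt_10_general U ξ hξ ζ hζ r₀ C hC x hx
end

section
/- Let X be a uniformly rotund Banach space with modulus δ_X, U ⊆ X open, ξ a gauge with ξ(r) ≤ δ_X(1/32), C a compact connected set that is (ξ,r₀) almost minimizing in U, x ∈ C, 0 < r < r₀, B(x,r) ⊆ U. Suppose C ∩ B(x,r) is a Lipschitz curve with endpoints x₀, x₁ and C ∩ ∂B(x,r) = {x₀,x₁}. Then ‖x₁ − x₀‖ ≥ (1 − ξ(r)) · 2r. -/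
open MeasureTheory

/-!
Running from `x₀` through the centre `x` to `x₁`, the curve `C ∩ B̄(x, r)` has length at least
`2r`. Replacing it by the segment `[x₀, x₁]` keeps `C` compact and connected (the curve meets the
sphere only at `x₀, x₁`) and unchanged outside the ball, so almost minimality gives
`2r ≤ (1 + ξ r) ‖x₁ - x₀‖`, and `(1 - ξ r)(1 + ξ r) ≤ 1`.
-/

open Set Metric

section Length

variable {X : Type*} [MetricSpace X] [MeasurableSpace X] [BorelSpace X]

-- `dist · a` is `1`-Lipschitz and maps `S` onto a set containing `[0, dist b a]`.
theorem IsPreconnected.ofReal_dist_le_hausdorffMeasure {S : Set X} (hS : IsPreconnected S)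
    {a b : X} (ha : a ∈ S) (hb : b ∈ S) : ENNReal.ofReal (dist a b) ≤ μH[1] S := by
  have hf : LipschitzWith 1 (dist · a) := LipschitzWith.dist_left a
  have hIcc : Icc 0 (dist b a) ⊆ (dist · a) '' S :=
    (hS.image _ hf.continuous.continuousOn).Icc_subset ⟨a, ha, dist_self a⟩ ⟨b, hb, rfl⟩
  calc ENNReal.ofReal (dist a b) = volume (Icc 0 (dist b a)) := by
        rw [Real.volume_Icc, sub_zero, dist_comm]
    _ ≤ μH[1] ((dist · a) '' S) := by rw [hausdorffMeasure_real]; exact measure_mono hIcc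
    _ ≤ μH[1] S := by simpa using hf.hausdorffMeasure_image_le zero_le_one S

theorem ofReal_dist_add_dist_le_hausdorffMeasure_image {γ : ℝ → X} {a b t : ℝ}
    (hγ : ContinuousOn γ (Icc a b)) (hinj : InjOn γ (Icc a b)) (ht : t ∈ Icc a b) :
    ENNReal.ofReal (dist (γ a) (γ t) + dist (γ t) (γ b)) ≤ μH[1] (γ '' Icc a b) := by
  have := Measure.nullSingletonClass_hausdorff X one_pos
  have hsub₁ : Icc a t ⊆ Icc a b := Icc_subset_Icc le_rfl ht.2
  have hsub₂ : Icc t b ⊆ Icc a b := Icc_subset_Icc ht.1 le_rfl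
  have hinter : γ '' Icc a t ∩ γ '' Icc t b ⊆ {γ t} := by
    rintro _ ⟨⟨s, hs, rfl⟩, s', hs', hss'⟩
    obtain rfl : s' = s := hinj (hsub₂ hs') (hsub₁ hs) hss'
    rw [le_antisymm hs.2 hs'.1]; rfl
  have hclosed : IsClosed (γ '' Icc t b) :=
    (isCompact_Icc.image_of_continuousOn (hγ.mono hsub₂)).isClosed
  calc ENNReal.ofReal (dist (γ a) (γ t) + dist (γ t) (γ b))
      ≤ μH[1] (γ '' Icc a t) + μH[1] (γ '' Icc t b) := by
        rw [ENNReal.ofReal_add dist_nonneg dist_nonneg]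
        gcongr
        · exact (isPreconnected_Icc.image γ (hγ.mono hsub₁)).ofReal_dist_le_hausdorffMeasure
            ⟨a, left_mem_Icc.2 ht.1, rfl⟩ ⟨t, right_mem_Icc.2 ht.1, rfl⟩
        · exact (isPreconnected_Icc.image γ (hγ.mono hsub₂)).ofReal_dist_le_hausdorffMeasure
            ⟨t, left_mem_Icc.2 ht.2, rfl⟩ ⟨b, right_mem_Icc.2 ht.2, rfl⟩
    _ = μH[1] (γ '' Icc a t ∪ γ '' Icc t b) := by
        rw [← measure_union_add_inter _ hclosed.measurableSet,
          measure_mono_null hinter (measure_singleton _), add_zero]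
    _ = μH[1] (γ '' Icc a b) := by rw [← image_union, Icc_union_Icc_eq_Icc ht.1 ht.2]

end Length

section Connected

variable {X : Type*} [TopologicalSpace X] {C T V : Set X}

-- A closed separation `u, v` of `C \ V ∪ T` with `T ⊆ u` induces the closed separation
-- `u \ V ∪ closure V`, `v \ V` of `C`.
theorem IsPreconnected.diff_union_subset_of_subset (hC : IsPreconnected C) (hV : IsOpen V)
    (hCV : (C ∩ closure V).Nonempty) (hfr : C ∩ frontier V ⊆ T) {u v : Set X}
    (hu : IsClosed u) (hv : IsClosed v) (hcover : C \ V ∪ T ⊆ u ∪ v)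
    (hdisj : (C \ V ∪ T) ∩ (u ∩ v) = ∅) (hTu : T ⊆ u) : C \ V ∪ T ⊆ u := by
  have hfrontier : ∀ y ∈ C, y ∉ V → y ∈ closure V → y ∈ u := fun y hy hyV hycl =>
    hTu (hfr ⟨hy, by rw [frontier, hV.interior_eq]; exact ⟨hycl, hyV⟩⟩)
  have hnotv : ∀ y ∈ C, y ∉ V → y ∈ u → y ∉ v := fun y hy hyV hyu hyv =>
    (eq_empty_iff_forall_notMem.1 hdisj) y ⟨Or.inl ⟨hy, hyV⟩, hyu, hyv⟩
  have hcoverC : C ⊆ (u \ V ∪ closure V) ∪ (v \ V) := by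
    intro y hy
    by_cases hyV : y ∈ V
    · exact Or.inl (Or.inr (subset_closure hyV))
    · rcases hcover (Or.inl ⟨hy, hyV⟩) with hyu | hyv
      · exact Or.inl (Or.inl ⟨hyu, hyV⟩)
      · exact Or.inr ⟨hyv, hyV⟩
  have hdisjC : C ∩ ((u \ V ∪ closure V) ∩ (v \ V)) = ∅ := by
    refine eq_empty_iff_forall_notMem.2 fun y ⟨hy, hy₁, hyv, hyV⟩ => ?_
    refine hnotv y hy hyV ?_ hyv
    rcases hy₁ with ⟨hyu, -⟩ | hycl
    exacts [hyu, hfrontier y hy hyV hycl]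
  rcases isPreconnected_iff_subset_of_disjoint_closed.1 hC _ _
    ((hu.sdiff hV).union isClosed_closure) (hv.sdiff hV) hcoverC hdisjC with hCu | hCv
  · refine union_subset (fun y ⟨hy, hyV⟩ => ?_) hTu
    rcases hCu hy with ⟨hyu, -⟩ | hycl
    exacts [hyu, hfrontier y hy hyV hycl]
  · obtain ⟨y, hy, hycl⟩ := hCV
    obtain ⟨hyv, hyV⟩ := hCv hy
    exact absurd hyv (hnotv y hy hyV (hfrontier y hy hyV hycl))

theorem IsPreconnected.diff_union (hC : IsPreconnected C) (hT : IsPreconnected T)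
    (hV : IsOpen V) (hCV : (C ∩ closure V).Nonempty) (hfr : C ∩ frontier V ⊆ T) :
    IsPreconnected (C \ V ∪ T) := by
  rw [isPreconnected_iff_subset_of_disjoint_closed]
  intro u v hu hv hcover hdisj
  have hTuv := isPreconnected_iff_subset_of_disjoint_closed.1 hT u v hu hv
    (subset_union_right.trans hcover)
    (subset_eq_empty (inter_subset_inter_left _ subset_union_right) hdisj)
  rcases hTuv with hTu | hTv
  · exact Or.inl (hC.diff_union_subset_of_subset hV hCV hfr hu hv hcover hdisj hTu)
  · rw [union_comm u v] at hcover
    rw [inter_comm u v] at hdisj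
    exact Or.inr (hC.diff_union_subset_of_subset hV hCV hfr hv hu hcover hdisj hTv)

end Connected

theorem one_sub_mul_le_of_ofReal_le_mul {e a b : ℝ} (ha : 0 < a) (hb : 0 ≤ b)
    (h : ENNReal.ofReal a ≤ ENNReal.ofReal (1 + e) * ENNReal.ofReal b) : (1 - e) * a ≤ b := by
  rcases le_or_gt 1 e with he | he
  · nlinarith
  have hpos : 0 < 1 + e := by
    by_contra! hneg
    rw [ENNReal.ofReal_of_nonpos hneg, zero_mul, nonpos_iff_eq_zero, ENNReal.ofReal_eq_zero] at h
    linarith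
  rw [← ENNReal.ofReal_mul hpos.le, ENNReal.ofReal_le_ofReal_iff (by positivity)] at h
  nlinarith [mul_le_mul_of_nonneg_left h (by linarith : 0 ≤ 1 - e), sq_nonneg e]

theorem stmt_13_general {X : Type*} [NormedAddCommGroup X] [NormedSpace ℝ X]
    [MeasurableSpace X] [BorelSpace X]
    (U : Set X) (ξ : ℝ → ℝ)
    (r₀ : ℝ) (C : Set X) (hC : AlmostMinimizing ξ r₀ U C)
    (x : X) (hx : x ∈ C) (r : ℝ) (hr : 0 < r) (hrr₀ : r < r₀)
    (hB : Metric.closedBall x r ⊆ U)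
    (x₀ x₁ : X) (γ : ℝ → X) (K : NNReal)
    (hlip : LipschitzOnWith K γ (Set.Icc 0 1)) (hinj : Set.InjOn γ (Set.Icc 0 1))
    (hγ0 : γ 0 = x₀) (hγ1 : γ 1 = x₁)
    (himg : C ∩ Metric.closedBall x r = γ '' Set.Icc 0 1)
    (hsph : C ∩ Metric.sphere x r = {x₀, x₁}) :
    (1 - ξ r) * (2 * r) ≤ ‖x₁ - x₀‖ := by
  obtain ⟨hCcpt, hCconn, -, hmin⟩ := hC
  have hx₀ : x₀ ∈ C ∩ sphere x r := hsph ▸ mem_insert _ _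
  have hx₁ : x₁ ∈ C ∩ sphere x r := hsph ▸ mem_insert_of_mem _ rfl
  obtain ⟨t, ht, hγt⟩ : x ∈ γ '' Icc 0 1 := himg ▸ ⟨hx, mem_closedBall_self hr.le⟩
  have hlength : ENNReal.ofReal (2 * r) ≤ μH[1] (C ∩ closedBall x r) := by
    have := ofReal_dist_add_dist_le_hausdorffMeasure_image hlip.continuousOn hinj ht
    rwa [hγ0, hγ1, hγt, dist_comm x, hx₀.2, hx₁.2, ← two_mul, ← himg] at this
  have hseg : segment ℝ x₀ x₁ ⊆ closedBall x r := (convex_closedBall x r).segment_subset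
    (sphere_subset_closedBall hx₀.2) (sphere_subset_closedBall hx₁.2)
  have hsphere_seg : C ∩ sphere x r ⊆ segment ℝ x₀ x₁ := hsph ▸
    insert_subset (left_mem_segment ℝ x₀ x₁) (singleton_subset_iff.2 (right_mem_segment ℝ x₀ x₁))
  set S := C \ ball x r ∪ segment ℝ x₀ x₁
  have hSconn : IsConnected S :=
    ⟨⟨x₀, Or.inr (left_mem_segment ℝ x₀ x₁)⟩, hCconn.isPreconnected.diff_union
      (convex_segment x₀ x₁).isPreconnected isOpen_ball
      (closure_ball x hr.ne' ▸ ⟨x, hx, mem_closedBall_self hr.le⟩)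
      (frontier_ball x hr.ne' ▸ hsphere_seg)⟩
  have hScpt : IsCompact S := (hCcpt.diff isOpen_ball).union <| by
    rw [segment_eq_image_lineMap]; exact isCompact_Icc.image (AffineMap.lineMap_continuous)
  have hSout : S \ closedBall x r = C \ closedBall x r := by
    rw [union_sdiff_distrib, sdiff_eq_empty.2 hseg, union_empty, sdiff_sdiff,
      union_eq_right.2 ball_subset_closedBall]
  have hSin : μH[1] (S ∩ closedBall x r) ≤ ENNReal.ofReal ‖x₁ - x₀‖ := by
    have hsub : S ∩ closedBall x r ⊆ segment ℝ x₀ x₁ := by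
      rintro y ⟨hyC | hyseg, hyB⟩
      · exact hsphere_seg ⟨hyC.1, (closedBall_sdiff_ball (x := x) (ε := r)) ▸ ⟨hyB, hyC.2⟩⟩
      · exact hyseg
    calc μH[1] (S ∩ closedBall x r) ≤ μH[1] (segment ℝ x₀ x₁) := measure_mono hsub
      _ = ENNReal.ofReal ‖x₁ - x₀‖ := by
        rw [hausdorffMeasure_segment, edist_dist, dist_eq_norm, norm_sub_rev]
  refine one_sub_mul_le_of_ofReal_le_mul (by positivity) (norm_nonneg _) ?_
  calc ENNReal.ofReal (2 * r) ≤ μH[1] (C ∩ closedBall x r) := hlength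
    _ ≤ ENNReal.ofReal (1 + ξ r) * μH[1] (S ∩ closedBall x r) :=
        hmin x ⟨hx, hB (mem_closedBall_self hr.le)⟩ r hr hrr₀.le hB S hScpt hSconn hSout
    _ ≤ ENNReal.ofReal (1 + ξ r) * ENNReal.ofReal ‖x₁ - x₀‖ := by gcongr

theorem stmt_13 {X : Type*} [NormedAddCommGroup X] [NormedSpace ℝ X]
    [MeasurableSpace X] [BorelSpace X]
    (δX : ℝ → ℝ)
    (hδX : ∀ ε : ℝ, δX ε =
      sInf {d : ℝ | ∃ x y : X, ‖x‖ ≤ 1 ∧ ‖y‖ ≤ 1 ∧ ε ≤ ‖x - y‖ ∧ d = 1 - ‖x + y‖ / 2})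
    (hUR : ∀ ε : ℝ, 0 < ε → ε ≤ 2 → 0 < δX ε)
    (U : Set X) (hU : IsOpen U) (ξ : ℝ → ℝ) (hξ : IsGauge ξ)
    (r₀ : ℝ) (C : Set X) (hC : AlmostMinimizing ξ r₀ U C)
    (x : X) (hx : x ∈ C) (r : ℝ) (hr : 0 < r) (hrr₀ : r < r₀)
    (hB : Metric.closedBall x r ⊆ U)
    (hξδ : ξ r ≤ δX (1 / 32))
    (x₀ x₁ : X) (γ : ℝ → X) (K : NNReal)
    (hlip : LipschitzOnWith K γ (Set.Icc 0 1)) (hinj : Set.InjOn γ (Set.Icc 0 1))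
    (hγ0 : γ 0 = x₀) (hγ1 : γ 1 = x₁)
    (himg : C ∩ Metric.closedBall x r = γ '' Set.Icc 0 1)
    (hsph : C ∩ Metric.sphere x r = {x₀, x₁}) :
    (1 - ξ r) * (2 * r) ≤ ‖x₁ - x₀‖ :=
  stmt_13_general U ξ r₀ C hC x hx r hr hrr₀ hB x₀ x₁ γ K hlip hinj hγ0 hγ1 himg hsph
end

section
/- Let X be a Banach space, D ⊆ X a nonempty open set with nonempty complement, h(x) = dist(x, X\\D), x₀ ∈ D, and let Γ ⊆ D be a curve of finite H^1 measure with x₀ as one endpoint, parametrized by arclength γ : [0,L] → X with γ(0) = x₀, where L = H^1(Γ). Then ∫_Γ (1/h) dH^1 ≥ log(1 + L/h(x₀)). Consequently, if ∫_Γ (1/h) dH^1 ≤ M then L ≤ h(x₀)·e^M and Γ ⊆ B(x₀, h(x₀)e^M). -/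
/-!
Since `h = dist(·, X \ D)` and the arclength parametrisation `γ` are both 1-Lipschitz,
`h (γ t) ≤ h x₀ + t`, hence `∫_Γ 1/h dH¹ ≥ ∫₀^L dt / (h x₀ + t) = log (1 + L / h x₀)`.
The change of variables from `Γ` to `[0, L]` only needs an inequality: because `γ` is 1-Lipschitz
and `H¹(Γ) = L`, the pushforward of Lebesgue measure on `[0, L]` under `γ` is at most `H¹` on `Γ`.
The bound on `L` follows by exponentiating, and `‖γ t - x₀‖ ≤ t ≤ L` gives the ball.
-/

open MeasureTheory Set

open scoped ENNReal

section ArcLength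

variable {X : Type*} [EMetricSpace X] [MeasurableSpace X] [BorelSpace X]

/- Lipschitz maps do not increase `μH[1]`, so the image of `s \ T` is at most as long as `s \ T`;
since the whole image is at least as long as `s`, the image of `s ∩ T` must be at least as long as
`s ∩ T`. -/
theorem map_volume_restrict_le_hausdorffMeasure_restrict_image {g : ℝ → X} {s : Set ℝ}
    (hg : Measurable g) (hs_fin : volume s ≠ ∞) (hlip : LipschitzOnWith 1 g s)
    (hlen : volume s ≤ μH[1] (g '' s)) :
    (volume.restrict s).map g ≤ μH[1].restrict (g '' s) := by
  refine Measure.le_iff.2 fun A hA => ?_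
  rw [Measure.map_apply hg hA, Measure.restrict_apply (hg hA), Measure.restrict_apply hA,
    inter_comm]
  set T := g ⁻¹' A
  have hrest : μH[1] (g '' (s \ T)) ≤ volume (s \ T) := by
    simpa [hausdorffMeasure_real] using
      (hlip.mono sdiff_subset).hausdorffMeasure_image_le zero_le_one
  have hsplit : volume (s ∩ T) + volume (s \ T) ≤ μH[1] (g '' (s ∩ T)) + volume (s \ T) := calc
    volume (s ∩ T) + volume (s \ T) = volume s := measure_inter_add_sdiff s (hg hA)
    _ ≤ μH[1] (g '' s) := hlen
    _ = μH[1] (g '' (s ∩ T) ∪ g '' (s \ T)) := by rw [← image_union, inter_union_sdiff]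
    _ ≤ μH[1] (g '' (s ∩ T)) + μH[1] (g '' (s \ T)) := measure_union_le _ _
    _ ≤ μH[1] (g '' (s ∩ T)) + volume (s \ T) := by grw [hrest]
  calc volume (s ∩ T)
      ≤ μH[1] (g '' (s ∩ T)) :=
        (ENNReal.add_le_add_iff_right (measure_ne_top_of_subset sdiff_subset hs_fin)).1 hsplit
    _ ≤ μH[1] (A ∩ g '' s) :=
      measure_mono fun _ ⟨t, ht, e⟩ => e ▸ ⟨ht.2, mem_image_of_mem g ht.1⟩

theorem setLIntegral_comp_le_setLIntegral_hausdorffMeasure_image {γ : ℝ → X} {a b : ℝ}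
    (hab : a ≤ b) (hlip : LipschitzOnWith 1 γ (Icc a b))
    (hlen : ENNReal.ofReal (b - a) ≤ μH[1] (γ '' Icc a b)) {f : X → ℝ≥0∞} (hf : Measurable f) :
    ∫⁻ t in Icc a b, f (γ t) ≤ ∫⁻ z in γ '' Icc a b, f z ∂μH[1] := by
  set g := IccExtend hab ((Icc a b).domRestrict γ)
  have hgγ : EqOn g γ (Icc a b) := fun t ht => IccExtend_of_mem hab _ ht
  have hg : Measurable g := (continuous_IccExtend_iff.2 hlip.continuousOn.domRestrict).measurable
  rw [← image_congr hgγ] at hlen ⊢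
  calc ∫⁻ t in Icc a b, f (γ t) = ∫⁻ t in Icc a b, f (g t) :=
        setLIntegral_congr_fun measurableSet_Icc fun t ht => by rw [hgγ ht]
    _ = ∫⁻ z, f z ∂(volume.restrict (Icc a b)).map g := (lintegral_map hf hg).symm
    _ ≤ ∫⁻ z in g '' Icc a b, f z ∂μH[1] :=
        lintegral_mono' (map_volume_restrict_le_hausdorffMeasure_restrict_image hg (by simp)
          (fun x hx y hy => by rw [hgγ hx, hgγ hy]; exact hlip hx hy)
          (by rwa [Real.volume_Icc])) le_rfl

end ArcLength

theorem setLIntegral_Icc_one_div_const_add {a L : ℝ} (ha : 0 < a) (hL : 0 ≤ L) :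
    ∫⁻ t in Icc 0 L, ENNReal.ofReal (1 / (a + t)) = ENNReal.ofReal (Real.log (1 + L / a)) := by
  have hpos : ∀ t ∈ Icc 0 L, 0 < a + t := fun t ht => by linarith [ht.1]
  have hint : IntegrableOn (fun t => 1 / (a + t)) (Icc 0 L) :=
    (continuousOn_const.div (by fun_prop) fun t ht => (hpos t ht).ne').integrableOn_compact
      isCompact_Icc
  rw [← ofReal_integral_eq_lintegral_ofReal hint
      ((ae_restrict_iff' measurableSet_Icc).2
        (.of_forall fun t ht => (one_div_pos.2 (hpos t ht)).le)),
    integral_Icc_eq_integral_Ioc, ← intervalIntegral.integral_of_le hL,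
    intervalIntegral.integral_comp_add_left (fun u => 1 / u), add_zero,
    integral_one_div_of_pos ha (by linarith), add_div, div_self ha.ne']

theorem le_mul_exp_of_log_one_add_div_le {h L M : ℝ} (hh : 0 < h) (hL : 0 ≤ L)
    (hM : Real.log (1 + L / h) ≤ M) : L ≤ h * Real.exp M := by
  have h1 : 1 + L / h ≤ Real.exp M := (Real.log_le_iff_le_exp (by positivity)).1 hM
  calc L = h * (L / h) := (mul_div_cancel₀ L hh.ne').symm
    _ ≤ h * Real.exp M := by gcongr; linarith

theorem LipschitzOnWith.dist_le_of_mem_Icc {X : Type*} [PseudoMetricSpace X] {γ : ℝ → X}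
    {a b t : ℝ} (hγ : LipschitzOnWith 1 γ (Icc a b)) (ht : t ∈ Icc a b) :
    dist (γ t) (γ a) ≤ t - a := by
  simpa [Real.dist_eq, abs_of_nonneg (sub_nonneg.2 ht.1)] using
    hγ.dist_le_mul t ht a (left_mem_Icc.2 (ht.1.trans ht.2))

theorem ofReal_log_le_setLIntegral_image_one_div {X : Type*} [MetricSpace X] [MeasurableSpace X]
    [BorelSpace X] {h : X → ℝ} (hh : LipschitzWith 1 h) {γ : ℝ → X} {L : ℝ} (hL : 0 ≤ L)
    (hγ : LipschitzOnWith 1 γ (Icc 0 L)) (hlen : ENNReal.ofReal L ≤ μH[1] (γ '' Icc 0 L))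
    (hpos : ∀ z ∈ γ '' Icc 0 L, 0 < h z) :
    ENNReal.ofReal (Real.log (1 + L / h (γ 0))) ≤
      ∫⁻ z in γ '' Icc 0 L, ENNReal.ofReal (1 / h z) ∂μH[1] := by
  have hle : ∀ t ∈ Icc 0 L, h (γ t) ≤ h (γ 0) + t := fun t ht => by
    simpa using (hh.le_add_mul (γ t) (γ 0)).trans (by simpa using hγ.dist_le_of_mem_Icc ht)
  calc ENNReal.ofReal (Real.log (1 + L / h (γ 0)))
      = ∫⁻ t in Icc 0 L, ENNReal.ofReal (1 / (h (γ 0) + t)) :=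
        (setLIntegral_Icc_one_div_const_add
          (hpos _ (mem_image_of_mem γ (left_mem_Icc.2 hL))) hL).symm
    _ ≤ ∫⁻ t in Icc 0 L, ENNReal.ofReal (1 / h (γ t)) :=
        setLIntegral_mono' measurableSet_Icc fun t ht => ENNReal.ofReal_le_ofReal <|
          one_div_le_one_div_of_le (hpos _ (mem_image_of_mem γ ht)) (hle t ht)
    _ ≤ ∫⁻ z in γ '' Icc 0 L, ENNReal.ofReal (1 / h z) ∂μH[1] :=
        setLIntegral_comp_le_setLIntegral_hausdorffMeasure_image hL hγ (by simpa using hlen)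
          (hh.continuous.measurable.const_div 1).ennreal_ofReal

theorem stmt_17_general {X : Type*} [NormedAddCommGroup X] [NormedSpace ℝ X]
    [MeasurableSpace X] [BorelSpace X]
    (D : Set X) (hD : IsOpen D) (hDc : Dᶜ.Nonempty)
    (x₀ : X) (hx₀ : x₀ ∈ D)
    (L : ℝ) (hL : 0 < L) (γ : ℝ → X) (Γ : Set X)
    (hΓ : Γ = γ '' Set.Icc 0 L) (hΓD : Γ ⊆ D)
    (hlip : LipschitzOnWith 1 γ (Set.Icc 0 L))
    (hγ0 : γ 0 = x₀)
    (harc : ∀ s t : ℝ, 0 ≤ s → s ≤ t → t ≤ L →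
      μH[1] (γ '' Set.Icc s t) = ENNReal.ofReal (t - s)) :
    ENNReal.ofReal (Real.log (1 + L / Metric.infDist x₀ Dᶜ)) ≤
        ∫⁻ z in Γ, ENNReal.ofReal (1 / Metric.infDist z Dᶜ) ∂μH[1] ∧
      ∀ M : ℝ,
        (∫⁻ z in Γ, ENNReal.ofReal (1 / Metric.infDist z Dᶜ) ∂μH[1]) ≤ ENNReal.ofReal M →
        L ≤ Metric.infDist x₀ Dᶜ * Real.exp M ∧
          Γ ⊆ Metric.closedBall x₀ (Metric.infDist x₀ Dᶜ * Real.exp M) := by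
  subst hΓ hγ0
  have hpos : ∀ z ∈ D, 0 < Metric.infDist z Dᶜ := fun z hz =>
    (hD.isClosed_compl.notMem_iff_infDist_pos hDc).1 (not_not_intro hz)
  have hlog := ofReal_log_le_setLIntegral_image_one_div (Metric.lipschitz_infDist_pt Dᶜ) hL.le
    hlip (by simpa using (harc 0 L le_rfl hL.le le_rfl).ge) fun z hz => hpos z (hΓD hz)
  refine ⟨hlog, fun M hM => ?_⟩
  have hh₀ := hpos _ hx₀
  have hLM : L ≤ Metric.infDist (γ 0) Dᶜ * Real.exp M :=
    le_mul_exp_of_log_one_add_div_le hh₀ hL.le <|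
      (ENNReal.ofReal_le_ofReal_iff'.1 (hlog.trans hM)).resolve_right
        (Real.log_pos (by simpa using div_pos hL hh₀)).not_ge
  refine ⟨hLM, ?_⟩
  rintro _ ⟨t, ht, rfl⟩
  exact Metric.mem_closedBall.2 <| (hlip.dist_le_of_mem_Icc ht).trans (by linarith [ht.2])

theorem stmt_17 {X : Type*} [NormedAddCommGroup X] [NormedSpace ℝ X]
    [MeasurableSpace X] [BorelSpace X]
    (D : Set X) (hD : IsOpen D) (hDc : Dᶜ.Nonempty)
    (x₀ : X) (hx₀ : x₀ ∈ D)
    (L : ℝ) (hL : 0 < L) (γ : ℝ → X) (Γ : Set X)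
    (hΓ : Γ = γ '' Set.Icc 0 L) (hΓD : Γ ⊆ D)
    (hlip : LipschitzOnWith 1 γ (Set.Icc 0 L)) (hinj : Set.InjOn γ (Set.Icc 0 L))
    (hγ0 : γ 0 = x₀)
    (harc : ∀ s t : ℝ, 0 ≤ s → s ≤ t → t ≤ L →
      μH[1] (γ '' Set.Icc s t) = ENNReal.ofReal (t - s)) :
    ENNReal.ofReal (Real.log (1 + L / Metric.infDist x₀ Dᶜ)) ≤
        ∫⁻ z in Γ, ENNReal.ofReal (1 / Metric.infDist z Dᶜ) ∂μH[1] ∧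
      ∀ M : ℝ,
        (∫⁻ z in Γ, ENNReal.ofReal (1 / Metric.infDist z Dᶜ) ∂μH[1]) ≤ ENNReal.ofReal M →
        L ≤ Metric.infDist x₀ Dᶜ * Real.exp M ∧
          Γ ⊆ Metric.closedBall x₀ (Metric.infDist x₀ Dᶜ * Real.exp M) :=
  stmt_17_general D hD hDc x₀ hx₀ L hL γ Γ hΓ hΓD hlip hγ0 harc
end
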